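/- arXiv:1602.08448 — 6 statements merged into one kernel-verified Lean document; each statement's English description precedes it below -/
import Mathlib

section
/- Let θ̲ < θ̄, k ≥ 2, let θ* ∈ (θ̲, θ̄)ᵏ have a unique largest coordinate at index I* (θ*_{I*} > θ*_j for all j ≠ I*), and fix i ≠ I*. Then for every nonnegative vector ψ ∈ ℝᵏ with ψ₁ + ⋯ + ψₖ = 1, the infimum of D_ψ(θ* ‖ θ) := Σ_{j=1}^{k} ψ_j·d(θ*_j, θ_j) over the set Θ̄_i := { θ ∈ (θ̲, θ̄)ᵏ : θ_i ≥ θ_{I*} } equals the infimum over x ∈ ℝ of ψ_{I*}·d(θ*_{I*}, x) + ψ_i·d(θ*_i, x). -/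
/-! `x ↦ d(θ, x)` is `A` minus its tangent line at `θ`: a nonnegative convex function vanishing
at `θ`, hence nonincreasing in `|x - θ|` on each side of `θ`. Since `θ*_i < θ*_{I*}`, any pair
`(θ_{I*}, θ_i)` with `θ_{I*} ≤ θ_i` can be replaced by the projection `x` of `θ_i` onto
`[θ*_i, θ*_{I*}]`: it lies between `θ*_{I*}` and `θ_{I*}` and between `θ*_i` and `θ_i`, so both
divergences only decrease. The other coordinates contribute at least `0`, attained at
`θ_j = θ*_j`, and `x ∈ [θ*_i, θ*_{I*}] ⊆ (θ̲, θ̄)` keeps the resulting point feasible. -/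

/-- Kullback–Leibler divergence in a one-dimensional exponential family with
log-partition function `A`: `d(θ, x) = (θ - x)·A'(θ) - A(θ) + A(x)`. -/
noncomputable def dKL (A : ℝ → ℝ) (θ x : ℝ) : ℝ := (θ - x) * deriv A θ - A θ + A x

open Set

section Divergence

variable {A : ℝ → ℝ} {θ : ℝ}

lemma dKL_self (A : ℝ → ℝ) (θ : ℝ) : dKL A θ θ = 0 := by simp [dKL]

lemma dKL_nonneg (hconv : ConvexOn ℝ univ A) (hθ : DifferentiableAt ℝ A θ) (x : ℝ) :
    0 ≤ dKL A θ x := by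
  rcases lt_trichotomy x θ with hx | rfl | hx
  · have h := hconv.slope_le_deriv trivial trivial hx hθ
    rw [slope_def_field, div_le_iff₀ (sub_pos.2 hx)] at h
    unfold dKL
    linarith
  · rw [dKL_self]
  · have h := hconv.deriv_le_slope trivial trivial hx hθ
    rw [slope_def_field, le_div_iff₀ (sub_pos.2 hx)] at h
    unfold dKL
    linarith

lemma convexOn_dKL (hconv : ConvexOn ℝ univ A) (θ : ℝ) : ConvexOn ℝ univ (dKL A θ) := by
  have h_affine : ConvexOn ℝ univ fun x => (θ - x) * deriv A θ - A θ :=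
    ⟨convex_univ, fun x _ y _ a b _ _ hab => le_of_eq <| by
      simp only [smul_eq_mul]
      linear_combination (θ * deriv A θ - A θ) * hab.symm⟩
  exact h_affine.add hconv

lemma dKL_le_of_mem_uIcc (hconv : ConvexOn ℝ univ A) (hθ : DifferentiableAt ℝ A θ) {x y : ℝ}
    (hx : x ∈ uIcc θ y) : dKL A θ x ≤ dKL A θ y := by
  have h := (convexOn_dKL hconv θ).le_on_segment trivial trivial (by rwa [segment_eq_uIcc])
  rwa [dKL_self, max_eq_right (dKL_nonneg hconv hθ y)] at h

end Divergence

lemma exists_mem_Icc_mem_uIcc_mem_uIcc {α : Type*} [LinearOrder α] {p q a c : α}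
    (hpq : p ≤ q) (hac : a ≤ c) : ∃ x ∈ Icc p q, x ∈ uIcc q a ∧ x ∈ uIcc p c := by
  refine ⟨max p (min c q), ?_⟩
  simp only [mem_Icc, mem_uIcc]
  grind

lemma exists_mem_Icc_add_mul_dKL_le {A : ℝ → ℝ} (hconv : ConvexOn ℝ univ A) {p q : ℝ}
    (hp : DifferentiableAt ℝ A p) (hq : DifferentiableAt ℝ A q) (hpq : p ≤ q) {u v : ℝ}
    (hu : 0 ≤ u) (hv : 0 ≤ v) {a c : ℝ} (hac : a ≤ c) :
    ∃ x ∈ Icc p q, u * dKL A q x + v * dKL A p x ≤ u * dKL A q a + v * dKL A p c := by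
  obtain ⟨x, hx, hxa, hxc⟩ := exists_mem_Icc_mem_uIcc_mem_uIcc hpq hac
  refine ⟨x, hx, ?_⟩
  gcongr
  exacts [dKL_le_of_mem_uIcc hconv hq hxa, dKL_le_of_mem_uIcc hconv hp hxc]

lemma sum_mul_dKL_ite_eq_add {ι : Type*} [Fintype ι] [DecidableEq ι] (A : ℝ → ℝ)
    (w θ : ι → ℝ) {i j : ι} (hij : i ≠ j) (y : ℝ) :
    ∑ k, w k * dKL A (θ k) (if k = i ∨ k = j then y else θ k) =
      w i * dKL A (θ i) y + w j * dKL A (θ j) y := by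
  rw [Fintype.sum_eq_add i j hij]
  · simp
  · rintro k ⟨hki, hkj⟩
    simp [hki, hkj, dKL_self]

theorem stmt_1_general (A : ℝ → ℝ) (hA : Differentiable ℝ A)
    (hconv : StrictConvexOn ℝ (Set.univ : Set ℝ) A)
    (lo hi : ℝ) (k : ℕ)
    (θs : Fin k → ℝ) (hθs : ∀ j, θs j ∈ Set.Ioo lo hi)
    (Istar : Fin k) (hIstar : ∀ j, j ≠ Istar → θs j < θs Istar)
    (i : Fin k) (hiI : i ≠ Istar)
    (ψ : Fin k → ℝ) (hψ : ∀ j, 0 ≤ ψ j) :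
    sInf ((fun θ : Fin k → ℝ => ∑ j, ψ j * dKL A (θs j) (θ j)) ''
        {θ : Fin k → ℝ | (∀ j, θ j ∈ Set.Ioo lo hi) ∧ θ Istar ≤ θ i}) =
      ⨅ x : ℝ, (ψ Istar * dKL A (θs Istar) x + ψ i * dKL A (θs i) x) := by
  have hconv := hconv.convexOn
  have hpq := (hIstar i hiI).le
  have hterm (j : Fin k) (x : ℝ) : 0 ≤ ψ j * dKL A (θs j) x :=
    mul_nonneg (hψ j) (dKL_nonneg hconv (hA _) x)
  apply le_antisymm
  · refine le_ciInf fun x => ?_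
    obtain ⟨y, hy, hyx⟩ :=
      exists_mem_Icc_add_mul_dKL_le hconv (hA _) (hA _) hpq (hψ Istar) (hψ i) le_rfl (a := x)
    have hy' : y ∈ Ioo lo hi := ⟨(hθs i).1.trans_le hy.1, hy.2.trans_lt (hθs Istar).2⟩
    calc _ ≤ ∑ j, ψ j * dKL A (θs j) (if j = Istar ∨ j = i then y else θs j) := by
          refine csInf_le ⟨0, ?_⟩ ⟨_, ⟨fun j => ?_, by simp⟩, rfl⟩
          · rintro _ ⟨θ, -, rfl⟩
            exact Finset.sum_nonneg fun j _ => hterm j (θ j)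
          · split_ifs
            exacts [hy', hθs j]
      _ = _ := sum_mul_dKL_ite_eq_add A ψ θs hiI.symm y
      _ ≤ _ := hyx
  · refine le_csInf ⟨_, fun _ => θs i, ⟨fun _ => hθs i, le_rfl⟩, rfl⟩ ?_
    rintro _ ⟨θ, ⟨-, hle⟩, rfl⟩
    obtain ⟨x, -, hx⟩ :=
      exists_mem_Icc_add_mul_dKL_le hconv (hA _) (hA _) hpq (hψ Istar) (hψ i) hle
    calc _ ≤ ψ Istar * dKL A (θs Istar) x + ψ i * dKL A (θs i) x :=
          ciInf_le ⟨(0 : ℝ), by rintro _ ⟨x, rfl⟩; exact add_nonneg (hterm Istar x) (hterm i x)⟩ x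
      _ ≤ _ := hx
      _ ≤ _ := Finset.add_le_sum (fun j _ => hterm j (θ j)) (Finset.mem_univ _)
          (Finset.mem_univ _) hiI.symm

/-- For `i ≠ I*`, the infimum of `D_ψ(θ* ‖ θ) = Σ_j ψ_j d(θ*_j, θ_j)` over
`Θ̄_i = {θ ∈ (θ̲, θ̄)ᵏ : θ_i ≥ θ_{I*}}` equals
`inf_{x ∈ ℝ} ψ_{I*} d(θ*_{I*}, x) + ψ_i d(θ*_i, x)`. -/
theorem stmt_1 (A : ℝ → ℝ) (hA : Differentiable ℝ A)
    (hconv : StrictConvexOn ℝ (Set.univ : Set ℝ) A)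
    (lo hi : ℝ) (hlh : lo < hi) (k : ℕ) (hk : 2 ≤ k)
    (θs : Fin k → ℝ) (hθs : ∀ j, θs j ∈ Set.Ioo lo hi)
    (Istar : Fin k) (hIstar : ∀ j, j ≠ Istar → θs j < θs Istar)
    (i : Fin k) (hiI : i ≠ Istar)
    (ψ : Fin k → ℝ) (hψ : ∀ j, 0 ≤ ψ j) (hsum : ∑ j, ψ j = 1) :
    sInf ((fun θ : Fin k → ℝ => ∑ j, ψ j * dKL A (θs j) (θ j)) ''
        {θ : Fin k → ℝ | (∀ j, θ j ∈ Set.Ioo lo hi) ∧ θ Istar ≤ θ i}) =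
      ⨅ x : ℝ, (ψ Istar * dKL A (θs Istar) x + ψ i * dKL A (θs i) x) :=
  stmt_1_general A hA hconv lo hi k θs hθs Istar hIstar i hiI ψ hψ
end

section
/- Fix θ₁, θ₂ ∈ ℝ and β, ψ > 0. There exists a unique x̄ ∈ [min(θ₁, θ₂), max(θ₁, θ₂)] satisfying A'(x̄) = (β·A'(θ₁) + ψ·A'(θ₂)) / (β + ψ); this x̄ is the unique global minimizer over x ∈ ℝ of the function x ↦ β·d(θ₁, x) + ψ·d(θ₂, x), and consequently C(β, ψ) = β·d(θ₁, x̄) + ψ·d(θ₂, x̄). -/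
/-- `C(β, ψ) = inf_{x ∈ ℝ} β·d(θ₁, x) + ψ·d(θ₂, x)`. -/
noncomputable def Cfun (A : ℝ → ℝ) (θ₁ θ₂ β ψ : ℝ) : ℝ :=
  ⨅ x : ℝ, (β * dKL A θ₁ x + ψ * dKL A θ₂ x)

/-!
With `x̄` chosen so that `(β + ψ)·A'(x̄) = β·A'(θ₁) + ψ·A'(θ₂)`, the objective differs from its
value at `x̄` by exactly `(β + ψ)·d(x̄, x)`, which is positive for `x ≠ x̄` by strict convexity.
Such an `x̄` exists between `θ₁` and `θ₂` by Darboux's theorem, and it is unique there because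
`A'` is strictly increasing.
-/

open Set

theorem dKL_pos {A : ℝ → ℝ} (hconv : StrictConvexOn ℝ univ A) {θ x : ℝ}
    (hθ : DifferentiableAt ℝ A θ) (hx : x ≠ θ) : 0 < dKL A θ x := by
  rw [dKL]
  rcases hx.lt_or_gt with hlt | hgt
  · have h := hconv.slope_lt_deriv (mem_univ x) (mem_univ θ) hlt hθ
    rw [slope_def_field, div_lt_iff₀ (sub_pos.2 hlt)] at h
    linarith
  · have h := hconv.deriv_lt_slope (mem_univ θ) (mem_univ x) hgt hθ
    rw [slope_def_field, lt_div_iff₀ (sub_pos.2 hgt)] at h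
    linarith

theorem weighted_dKL_eq_add_dKL (A : ℝ → ℝ) {θ₁ θ₂ β ψ xb : ℝ}
    (hxb : (β + ψ) * deriv A xb = β * deriv A θ₁ + ψ * deriv A θ₂) (x : ℝ) :
    β * dKL A θ₁ x + ψ * dKL A θ₂ x =
      β * dKL A θ₁ xb + ψ * dKL A θ₂ xb + (β + ψ) * dKL A xb x := by
  simp only [dKL]
  linear_combination (x - xb) * hxb

theorem weighted_mean_mem_uIcc {a b β ψ : ℝ} (hβ : 0 ≤ β) (hψ : 0 ≤ ψ) (hβψ : 0 < β + ψ) :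
    (β * a + ψ * b) / (β + ψ) ∈ uIcc a b := by
  rw [← segment_eq_uIcc, mem_segment_iff_div]
  refine ⟨β, ψ, hβ, hψ, hβψ, ?_⟩
  simp only [smul_eq_mul]
  ring

theorem segment_deriv_subset_image_uIcc {f : ℝ → ℝ} (hf : Differentiable ℝ f) (a b : ℝ) :
    segment ℝ (deriv f a) (deriv f b) ⊆ deriv f '' uIcc a b :=
  ((convex_uIcc a b).image_deriv fun x _ ↦ hf x).segment_subset
    (mem_image_of_mem _ left_mem_uIcc) (mem_image_of_mem _ right_mem_uIcc)

/-- There is a unique `x̄ ∈ [min(θ₁,θ₂), max(θ₁,θ₂)]` with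
`A'(x̄) = (β·A'(θ₁) + ψ·A'(θ₂))/(β + ψ)`; it is the unique global minimizer of
`x ↦ β·d(θ₁, x) + ψ·d(θ₂, x)`, and `C(β, ψ) = β·d(θ₁, x̄) + ψ·d(θ₂, x̄)`. -/
theorem stmt_3 (A : ℝ → ℝ) (hA : Differentiable ℝ A)
    (hconv : StrictConvexOn ℝ (Set.univ : Set ℝ) A)
    (θ₁ θ₂ β ψ : ℝ) (hβ : 0 < β) (hψ : 0 < ψ) :
    ∃ xb : ℝ,
      (xb ∈ Set.Icc (min θ₁ θ₂) (max θ₁ θ₂) ∧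
        deriv A xb = (β * deriv A θ₁ + ψ * deriv A θ₂) / (β + ψ)) ∧
      (∀ y ∈ Set.Icc (min θ₁ θ₂) (max θ₁ θ₂),
        deriv A y = (β * deriv A θ₁ + ψ * deriv A θ₂) / (β + ψ) → y = xb) ∧
      (∀ x : ℝ, x ≠ xb →
        β * dKL A θ₁ xb + ψ * dKL A θ₂ xb < β * dKL A θ₁ x + ψ * dKL A θ₂ x) ∧
      Cfun A θ₁ θ₂ β ψ = β * dKL A θ₁ xb + ψ * dKL A θ₂ xb := by
  have hβψ : 0 < β + ψ := add_pos hβ hψ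
  obtain ⟨xb, hxb, hderiv⟩ := segment_deriv_subset_image_uIcc hA θ₁ θ₂ <| by
    rw [segment_eq_uIcc]; exact weighted_mean_mem_uIcc hβ.le hψ.le hβψ
  have hbalance : (β + ψ) * deriv A xb = β * deriv A θ₁ + ψ * deriv A θ₂ := by
    rw [hderiv]; field_simp
  have hdecomp := weighted_dKL_eq_add_dKL A hbalance
  have hlt : ∀ x, x ≠ xb →
      β * dKL A θ₁ xb + ψ * dKL A θ₂ xb < β * dKL A θ₁ x + ψ * dKL A θ₂ x := fun x hx ↦ by
    rw [hdecomp x]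
    exact lt_add_of_pos_right _ (mul_pos hβψ (dKL_pos hconv (hA xb) hx))
  have hle : ∀ x, β * dKL A θ₁ xb + ψ * dKL A θ₂ xb ≤ β * dKL A θ₁ x + ψ * dKL A θ₂ x :=
    fun x ↦ (eq_or_ne x xb).elim (fun h ↦ h ▸ le_rfl) fun h ↦ (hlt x h).le
  have hmono := hconv.strictMonoOn_deriv fun x _ ↦ hA x
  refine ⟨xb, ⟨hxb, hderiv⟩, fun y _ hy ↦ ?_, hlt, ?_⟩
  · exact hmono.injOn (mem_univ y) (mem_univ xb) (hy.trans hderiv.symm)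
  · exact (IsLeast.isGLB ⟨mem_range_self xb, forall_mem_range.2 hle⟩).ciInf_eq
end

section
/- Let (Ω, ℱ, 𝐏) be a probability space with a filtration (ℋ_n)_{n ≥ 1}. Let (Y_n)_{n ≥ 1} be identically distributed, square-integrable real random variables adapted to (ℋ_n), and let (X_n)_{n ≥ 1} be {0,1}-valued random variables adapted to (ℋ_n). Suppose that for each n, Y_n is independent of the σ-algebra generated by ℋ_{n-1} together with X_n. Define Z_n := 𝐏(X_n = 1 | ℋ_{n-1}). Then with probability 1: (i) on the event that Σ_{ℓ=1}^{∞} Z_ℓ = ∞, the ratio (Σ_{ℓ=1}^{n} X_ℓ·Y_ℓ) / (Σ_{ℓ=1}^{n} Z_ℓ) converges to 𝐄[Y₁] as n → ∞; and (ii) on the event that Σ_{ℓ=1}^{∞} Z_ℓ < ∞, sup over n of |Σ_{ℓ=1}^{n} X_ℓ·Y_ℓ| is finite. -/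
/-!
Let `ξ n = X n * Y n`, `m = 𝔼[Y 0]`, `C = 𝔼[Y 0 ^ 2]` and `S n = ∑_{ℓ<n} Z ℓ`. Since `Y n` is
independent of `ℱ n ⊔ σ(X n)` and `X n ∈ {0, 1}`, `𝔼[ξ n | ℱ n] = m Z n` and
`𝔼[ξ n ^ 2 | ℱ n] = C Z n`. Hence the martingale transform
`M n = ∑_{ℓ<n} (ξ ℓ - m Z ℓ) / (1 + S (ℓ + 1))` has
`𝔼[M n ^ 2] ≤ C 𝔼[∑_{ℓ<n} Z ℓ / (1 + S (ℓ + 1)) ^ 2]`, and the sum telescopes to at most `1`;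
so `M` is L²-bounded and converges almost surely.
Summation by parts against the weights `1 + S (ℓ + 1)` turns this into the two claims:
Kronecker's lemma gives `∑_{ℓ<n} ξ ℓ - m S n = o(S n)` when `S n → ∞`, and a bounded
weight sequence keeps `∑_{ℓ<n} ξ ℓ` bounded when `S n` converges.
-/

open MeasureTheory ProbabilityTheory Filter Topology Finset Asymptotics

theorem sum_range_succ_mul_by_parts (b c : ℕ → ℝ) (n : ℕ) :
    ∑ ℓ ∈ range n, b (ℓ + 1) * c ℓ =
      b n * ∑ ℓ ∈ range n, c ℓ - ∑ ℓ ∈ range n, (b (ℓ + 1) - b ℓ) * ∑ j ∈ range ℓ, c j := by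
  induction n with
  | zero => simp
  | succ n ih => simp only [sum_range_succ, ih]; ring

/-- **Kronecker's lemma**. -/
theorem isLittleO_sum_range_succ_mul {b c : ℕ → ℝ} (hb : Monotone b)
    (hbtop : Tendsto b atTop atTop) {L : ℝ}
    (hc : Tendsto (fun n => ∑ ℓ ∈ range n, c ℓ) atTop (𝓝 L)) :
    (fun n => ∑ ℓ ∈ range n, b (ℓ + 1) * c ℓ) =o[atTop] b := by
  set s : ℕ → ℝ := fun n => ∑ ℓ ∈ range n, c ℓ
  have hs : (fun n => s n - L) =o[atTop] fun _ => (1 : ℝ) :=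
    (isLittleO_one_iff ℝ).2 (tendsto_sub_nhds_zero_iff.2 hc)
  have hconst : ∀ a : ℝ, (fun _ => a) =o[atTop] b := fun a =>
    isLittleO_const_left.2 (Or.inr (tendsto_norm_atTop_atTop.comp hbtop))
  have hΔ : ∀ n, 0 ≤ b (n + 1) - b n := fun n => sub_nonneg.2 (hb n.le_succ)
  have htail : (fun n => ∑ ℓ ∈ range n, (b (ℓ + 1) - b ℓ) * (s ℓ - L)) =o[atTop] b := by
    have h := ((isBigO_refl (fun n => b (n + 1) - b n) atTop).mul_isLittleO hs).sum_range
      (g := fun n => (b (n + 1) - b n) * 1) (fun n => by simpa using hΔ n)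
      ((tendsto_atTop_add_const_right _ (-b 0) hbtop).congr fun n => by
        simp only [mul_one, sum_range_sub]; ring)
    simp only [mul_one, sum_range_sub] at h
    exact h.trans_isBigO ((isBigO_refl b atTop).sub (hconst (b 0)).isBigO)
  have hmain := (((isBigO_refl b atTop).mul_isLittleO hs).trans_isBigO
    (by simpa using isBigO_refl b atTop)).sub htail |>.add (hconst (L * b 0))
  refine hmain.congr_left fun n => ?_
  have hsplit : ∑ ℓ ∈ range n, (b (ℓ + 1) - b ℓ) * (s ℓ - L) =
      ∑ ℓ ∈ range n, (b (ℓ + 1) - b ℓ) * s ℓ - (b n - b 0) * L := by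
    rw [← sum_range_sub, sum_mul, ← sum_sub_distrib]
    exact sum_congr rfl fun ℓ _ => by ring
  rw [sum_range_succ_mul_by_parts, hsplit]
  ring

theorem abs_sum_range_succ_mul_le {b c : ℕ → ℝ} (hb : Monotone b) (hb0 : 0 ≤ b 0) {K M : ℝ}
    (hbK : ∀ n, b n ≤ K) (hc : ∀ n, |∑ ℓ ∈ range n, c ℓ| ≤ M) (n : ℕ) :
    |∑ ℓ ∈ range n, b (ℓ + 1) * c ℓ| ≤ 2 * K * M := by
  have hbn : 0 ≤ b n := hb0.trans (hb n.zero_le)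
  have hΔ : ∀ ℓ, 0 ≤ b (ℓ + 1) - b ℓ := fun ℓ => sub_nonneg.2 (hb ℓ.le_succ)
  have htail : |∑ ℓ ∈ range n, (b (ℓ + 1) - b ℓ) * ∑ j ∈ range ℓ, c j| ≤ (b n - b 0) * M :=
    calc _ ≤ ∑ ℓ ∈ range n, (b (ℓ + 1) - b ℓ) * M := by
          refine (abs_sum_le_sum_abs _ _).trans (sum_le_sum fun ℓ _ => ?_)
          rw [abs_mul, abs_of_nonneg (hΔ ℓ)]
          exact mul_le_mul_of_nonneg_left (hc ℓ) (hΔ ℓ)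
      _ = (b n - b 0) * M := by rw [← sum_mul, sum_range_sub]
  have hM : 0 ≤ M := (abs_nonneg _).trans (hc 0)
  rw [sum_range_succ_mul_by_parts]
  calc _ ≤ |b n * ∑ ℓ ∈ range n, c ℓ| + (b n - b 0) * M := (abs_sub _ _).trans (by gcongr)
    _ ≤ b n * M + (b n - b 0) * M := by
        rw [abs_mul, abs_of_nonneg hbn]; gcongr; exact hc n
    _ ≤ 2 * K * M := by nlinarith [hbK n]

theorem sum_range_inv_one_add_sum_sq_mul_le_one {a : ℕ → ℝ} (ha : ∀ n, 0 ≤ a n) (n : ℕ) :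
    ∑ ℓ ∈ range n, ((1 + ∑ j ∈ range (ℓ + 1), a j)⁻¹) ^ 2 * a ℓ ≤ 1 := by
  set A : ℕ → ℝ := fun n => 1 + ∑ j ∈ range n, a j
  have hA : ∀ n, 1 ≤ A n := fun n => le_add_of_nonneg_right (sum_nonneg fun j _ => ha j)
  have hstep : ∀ ℓ, (A (ℓ + 1))⁻¹ ^ 2 * a ℓ ≤ (A ℓ)⁻¹ - (A (ℓ + 1))⁻¹ := by
    intro ℓ
    have hsucc : A (ℓ + 1) = A ℓ + a ℓ := by simp only [A, sum_range_succ]; ring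
    have h0 : 0 < A ℓ := zero_lt_one.trans_le (hA ℓ)
    rw [inv_sub_inv h0.ne' (by linarith [hA (ℓ + 1)]), hsucc, inv_pow, ← div_eq_inv_mul,
      add_sub_cancel_left, sq]
    have ha' := ha ℓ
    exact div_le_div_of_nonneg_left ha' (by positivity) (by nlinarith)
  calc _ ≤ ∑ ℓ ∈ range n, ((A ℓ)⁻¹ - (A (ℓ + 1))⁻¹) := sum_le_sum fun ℓ _ => hstep ℓ
    _ = 1 - (A n)⁻¹ := by rw [sum_range_sub']; simp [A]
    _ ≤ 1 := by linarith [inv_nonneg.2 (zero_le_one.trans (hA n))]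

theorem abs_inv_one_add_sum_abs_le_one (z : ℕ → ℝ) (n : ℕ) :
    |(1 + ∑ j ∈ range n, |z j|)⁻¹| ≤ 1 := by
  have h1 : 1 ≤ 1 + ∑ j ∈ range n, |z j| :=
    le_add_of_nonneg_right (sum_nonneg fun j _ => abs_nonneg _)
  rw [abs_of_nonneg (inv_nonneg.2 (zero_le_one.trans h1))]
  exact inv_le_one_of_one_le₀ h1

section Normalized

variable {x z : ℕ → ℝ} {a c : ℝ}

theorem monotone_sum_range_of_nonneg (hz : ∀ n, 0 ≤ z n) :
    Monotone fun n => ∑ ℓ ∈ range n, z ℓ :=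
  fun _ _ h => sum_le_sum_of_subset_of_nonneg (range_mono h) fun ℓ _ _ => hz ℓ

theorem one_add_sum_range_mul_inv_mul (hz : ∀ n, 0 ≤ z n) (y : ℝ) (n : ℕ) :
    (1 + ∑ ℓ ∈ range n, z ℓ) * ((1 + ∑ ℓ ∈ range n, z ℓ)⁻¹ * y) = y :=
  mul_inv_cancel_left₀ (by positivity [sum_nonneg fun ℓ (_ : ℓ ∈ range n) => hz ℓ]) y

theorem tendsto_sum_div_sum_of_tendsto_sum_inv_mul (hz : ∀ n, 0 ≤ z n)
    (hw : Tendsto (fun n => ∑ ℓ ∈ range n,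
      (1 + ∑ j ∈ range (ℓ + 1), z j)⁻¹ * (x ℓ - a * z ℓ)) atTop (𝓝 c))
    (hS : Tendsto (fun n => ∑ ℓ ∈ range n, z ℓ) atTop atTop) :
    Tendsto (fun n => (∑ ℓ ∈ range n, x ℓ) / ∑ ℓ ∈ range n, z ℓ) atTop (𝓝 a) := by
  set S : ℕ → ℝ := fun n => ∑ ℓ ∈ range n, z ℓ
  have hkron := isLittleO_sum_range_succ_mul ((monotone_sum_range_of_nonneg hz).const_add 1)
    (tendsto_atTop_add_const_left _ 1 hS) hw
  simp only [one_add_sum_range_mul_inv_mul hz] at hkron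
  have hbS : (fun n => 1 + S n) =O[atTop] S :=
    (isLittleO_const_left.2 (Or.inr (tendsto_norm_atTop_atTop.comp hS))).isBigO.add
      (isBigO_refl S atTop)
  have hdiv := ((hkron.trans_isBigO hbS).tendsto_div_nhds_zero).add_const a
  rw [zero_add] at hdiv
  refine hdiv.congr' ?_
  filter_upwards [hS.eventually_gt_atTop 0] with n hn
  rw [sum_sub_distrib, ← mul_sum, sub_div, mul_div_assoc, div_self hn.ne']
  ring

theorem exists_abs_sum_le_of_tendsto_sum_inv_mul (hz : ∀ n, 0 ≤ z n)
    (hw : Tendsto (fun n => ∑ ℓ ∈ range n,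
      (1 + ∑ j ∈ range (ℓ + 1), z j)⁻¹ * (x ℓ - a * z ℓ)) atTop (𝓝 c))
    {L : ℝ} (hS : Tendsto (fun n => ∑ ℓ ∈ range n, z ℓ) atTop (𝓝 L)) :
    ∃ B, ∀ n, |∑ ℓ ∈ range n, x ℓ| ≤ B := by
  obtain ⟨M, hM⟩ := hw.abs.bddAbove_range
  have hSL : ∀ n, ∑ ℓ ∈ range n, z ℓ ≤ L := (monotone_sum_range_of_nonneg hz).ge_of_tendsto hS
  refine ⟨2 * (1 + L) * M + |a| * L, fun n => ?_⟩
  have hbdd := abs_sum_range_succ_mul_le ((monotone_sum_range_of_nonneg hz).const_add 1)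
    (K := 1 + L) (by simp) (fun n => by linarith [hSL n]) (fun n => hM (Set.mem_range_self n)) n
  simp only [one_add_sum_range_mul_inv_mul hz, sum_sub_distrib, ← mul_sum] at hbdd
  have hSn : |a * ∑ ℓ ∈ range n, z ℓ| ≤ |a| * L := by
    rw [abs_mul, abs_of_nonneg (sum_nonneg fun ℓ _ => hz ℓ)]
    exact mul_le_mul_of_nonneg_left (hSL n) (abs_nonneg a)
  calc |∑ ℓ ∈ range n, x ℓ|
      = |(∑ ℓ ∈ range n, x ℓ - a * ∑ ℓ ∈ range n, z ℓ) + a * ∑ ℓ ∈ range n, z ℓ| := by ring_nf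
    _ ≤ _ := (abs_add_le _ _).trans (add_le_add hbdd hSn)

end Normalized

section Martingale

variable {Ω : Type*} {m0 : MeasurableSpace Ω} {μ : Measure Ω} [IsFiniteMeasure μ]

theorem MeasureTheory.Martingale.integral_sq_add_one {ℱ : Filtration ℕ m0} {f : ℕ → Ω → ℝ}
    (hf : Martingale f ℱ μ) (hf2 : ∀ n, MemLp (f n) 2 μ) (n : ℕ) :
    ∫ ω, f (n + 1) ω ^ 2 ∂μ = ∫ ω, f n ω ^ 2 ∂μ + ∫ ω, (f (n + 1) ω - f n ω) ^ 2 ∂μ := by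
  have hΔ : MemLp (f (n + 1) - f n) 2 μ := (hf2 (n + 1)).sub (hf2 n)
  have hcross_int : Integrable (f n * (f (n + 1) - f n)) μ := (hf2 n).integrable_mul hΔ
  have hcross : ∫ ω, f n ω * (f (n + 1) ω - f n ω) ∂μ = 0 := by
    have hΔcond : μ[f (n + 1) - f n | ℱ n] =ᵐ[μ] 0 := by
      filter_upwards [condExp_sub (hf.integrable (n + 1)) (hf.integrable n) (ℱ n),
        hf.condExp_ae_eq n.le_succ] with ω h1 h2
      simp [h1, h2, condExp_of_stronglyMeasurable (ℱ.le n) (hf.stronglyMeasurable n)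
        (hf.integrable n)]
    calc ∫ ω, f n ω * (f (n + 1) ω - f n ω) ∂μ
        = ∫ ω, μ[f n * (f (n + 1) - f n) | ℱ n] ω ∂μ := (integral_condExp (ℱ.le n)).symm
      _ = 0 := by
        rw [integral_eq_zero_of_ae]
        filter_upwards [condExp_mul_of_stronglyMeasurable_left (hf.stronglyMeasurable n)
          hcross_int (hΔ.integrable one_le_two), hΔcond] with ω h1 h2
        simp [h1, h2]
  calc ∫ ω, f (n + 1) ω ^ 2 ∂μ
      = ∫ ω, (f n ω ^ 2 + 2 * (f n ω * (f (n + 1) ω - f n ω)) + (f (n + 1) ω - f n ω) ^ 2) ∂μ :=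
        integral_congr_ae (Eventually.of_forall fun ω => by ring)
    _ = _ := by
      have h1 : Integrable (fun ω => f n ω ^ 2) μ := (hf2 n).integrable_sq
      have h2 : Integrable (fun ω => 2 * (f n ω * (f (n + 1) ω - f n ω))) μ :=
        hcross_int.const_mul 2
      have h3 : Integrable (fun ω => (f (n + 1) ω - f n ω) ^ 2) μ := hΔ.integrable_sq
      have h12 : Integrable (fun ω => f n ω ^ 2 + 2 * (f n ω * (f (n + 1) ω - f n ω))) μ :=
        h1.add h2
      rw [integral_add h12 h3, integral_add h1 h2, integral_const_mul, hcross]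
      ring

theorem MeasureTheory.Martingale.exists_ae_tendsto_of_integral_sq_le {ℱ : Filtration ℕ m0}
    {f : ℕ → Ω → ℝ} (hf : Martingale f ℱ μ) (hf2 : ∀ n, MemLp (f n) 2 μ) {R : ℝ}
    (hR : ∀ n, ∫ ω, f n ω ^ 2 ∂μ ≤ R) :
    ∀ᵐ ω ∂μ, ∃ c, Tendsto (fun n => f n ω) atTop (𝓝 c) := by
  refine hf.submartingale.exists_ae_tendsto_of_bdd
    (R := ((R + μ.real Set.univ) / 2).toNNReal) fun n => ?_
  have hint := (hf2 n).integrable one_le_two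
  rw [eLpNorm_one_eq_lintegral_enorm, ← ofReal_integral_norm_eq_lintegral_enorm hint]
  refine ENNReal.ofReal_le_ofReal ?_
  calc ∫ ω, ‖f n ω‖ ∂μ ≤ ∫ ω, (f n ω ^ 2 + 1) / 2 ∂μ := by
        refine integral_mono hint.norm
          (((hf2 n).integrable_sq.add (integrable_const 1)).div_const 2) fun ω => ?_
        simp only [Real.norm_eq_abs]
        nlinarith [sq_nonneg (|f n ω| - 1), sq_abs (f n ω)]
    _ = (∫ ω, f n ω ^ 2 ∂μ + μ.real Set.univ) / 2 := by
        rw [integral_div, integral_add (hf2 n).integrable_sq (integrable_const 1)]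
        simp
    _ ≤ (R + μ.real Set.univ) / 2 := by linarith [hR n]

section Innovation

variable {m : MeasurableSpace Ω} {g ξ : Ω → ℝ} {R : ℝ}

theorem condExp_mul_sub_condExp_ae_eq_zero (hm : m ≤ m0) (hg : StronglyMeasurable[m] g)
    (hgR : ∀ ω, |g ω| ≤ R) (hξ : Integrable ξ μ) :
    μ[g * (ξ - μ[ξ | m]) | m] =ᵐ[μ] 0 := by
  have hcond : μ[μ[ξ | m] | m] = μ[ξ | m] :=
    condExp_of_stronglyMeasurable hm stronglyMeasurable_condExp integrable_condExp
  filter_upwards [condExp_stronglyMeasurable_mul_of_bound hm hg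
    (hξ.sub (integrable_condExp (m := m) (f := ξ))) R (Eventually.of_forall hgR),
    condExp_sub hξ (integrable_condExp (m := m) (f := ξ)) m] with ω h1 h2
  simp [h1, h2, hcond]

theorem integral_sq_mul_sub_condExp_le (hm : m ≤ m0) (hg : StronglyMeasurable[m] g)
    (hgR : ∀ ω, |g ω| ≤ R) (hξ : MemLp ξ 2 μ) :
    ∫ ω, (g ω * (ξ ω - μ[ξ | m] ω)) ^ 2 ∂μ ≤ ∫ ω, g ω ^ 2 * μ[ξ ^ 2 | m] ω ∂μ := by
  have hg2 : StronglyMeasurable[m] (fun ω => g ω ^ 2) := hg.pow 2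
  have hg2R : ∀ᵐ ω ∂μ, ‖g ω ^ 2‖ ≤ R ^ 2 := Eventually.of_forall fun ω => by
    rw [Real.norm_eq_abs, abs_pow]
    exact pow_le_pow_left₀ (abs_nonneg _) (hgR ω) 2
  have hd2 : Integrable ((ξ - μ[ξ | m]) ^ 2) μ := (hξ.sub (hξ.condExp one_le_two)).integrable_sq
  have hpull : μ[(fun ω => g ω ^ 2) * (ξ - μ[ξ | m]) ^ 2 | m] =ᵐ[μ]
      (fun ω => g ω ^ 2) * Var[ξ; μ | m] :=
    condExp_stronglyMeasurable_mul_of_bound hm hg2 hd2 (R ^ 2) hg2R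
  have hg2m := (hg2.mono hm).aestronglyMeasurable (μ := μ)
  calc ∫ ω, (g ω * (ξ ω - μ[ξ | m] ω)) ^ 2 ∂μ
      = ∫ ω, ((fun ω => g ω ^ 2) * (ξ - μ[ξ | m]) ^ 2) ω ∂μ :=
        integral_congr_ae (Eventually.of_forall fun ω => by simp [mul_pow])
    _ = ∫ ω, g ω ^ 2 * Var[ξ; μ | m] ω ∂μ := by
        rw [← integral_condExp hm]; exact integral_congr_ae hpull
    _ ≤ ∫ ω, g ω ^ 2 * μ[ξ ^ 2 | m] ω ∂μ := by
        refine integral_mono_ae (integrable_condVar.bdd_mul hg2m hg2R)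
          (integrable_condExp.bdd_mul hg2m hg2R) ?_
        filter_upwards [condVar_ae_le_condExp_sq hm hξ] with ω hω
        exact mul_le_mul_of_nonneg_left hω (sq_nonneg _)

end Innovation

variable {ℱ : Filtration ℕ m0} {g ξ : ℕ → Ω → ℝ} {R : ℝ}

theorem martingale_sum_mul_sub_condExp (hg : ∀ n, StronglyMeasurable[ℱ n] (g n))
    (hgR : ∀ n ω, |g n ω| ≤ R) (hξ : ∀ n, StronglyMeasurable[ℱ (n + 1)] (ξ n))
    (hξint : ∀ n, Integrable (ξ n) μ) :
    Martingale (fun n => ∑ ℓ ∈ range n, g ℓ * (ξ ℓ - μ[ξ ℓ | ℱ ℓ])) ℱ μ := by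
  have hu_int : ∀ n, Integrable (g n * (ξ n - μ[ξ n | ℱ n])) μ := fun n =>
    ((hξint n).sub integrable_condExp).bdd_mul ((hg n).mono (ℱ.le n)).aestronglyMeasurable
      (Eventually.of_forall fun ω => (hgR n ω))
  have hf_int : ∀ n, Integrable (∑ ℓ ∈ range n, g ℓ * (ξ ℓ - μ[ξ ℓ | ℱ ℓ])) μ := fun n =>
    integrable_finsetSum' _ fun ℓ _ => hu_int ℓ
  have hadapted : StronglyAdapted ℱ fun n => ∑ ℓ ∈ range n, g ℓ * (ξ ℓ - μ[ξ ℓ | ℱ ℓ]) :=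
    fun n => Finset.stronglyMeasurable_sum _ fun ℓ hℓ => by
      have hℓn : ℓ + 1 ≤ n := mem_range.1 hℓ
      exact ((hg ℓ).mono (ℱ.mono (Nat.le_of_succ_le hℓn))).mul
        (((hξ ℓ).mono (ℱ.mono hℓn)).sub (stronglyMeasurable_condExp.mono (ℱ.mono (by omega))))
  refine martingale_nat hadapted hf_int fun n => ?_
  rw [sum_range_succ]
  filter_upwards [condExp_add (hf_int n) (hu_int n) (ℱ n),
    condExp_mul_sub_condExp_ae_eq_zero (ℱ.le n) (hg n) (hgR n) (hξint n)] with ω h1 h2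
  rw [h1, Pi.add_apply, h2, condExp_of_stronglyMeasurable (ℱ.le n) (hadapted n) (hf_int n)]
  simp

theorem exists_ae_tendsto_sum_mul_sub_condExp {B : ℝ} (hg : ∀ n, StronglyMeasurable[ℱ n] (g n))
    (hgR : ∀ n ω, |g n ω| ≤ R) (hξ : ∀ n, StronglyMeasurable[ℱ (n + 1)] (ξ n))
    (hξ2 : ∀ n, MemLp (ξ n) 2 μ)
    (hB : ∀ᵐ ω ∂μ, ∀ n, ∑ ℓ ∈ range n, g ℓ ω ^ 2 * μ[ξ ℓ ^ 2 | ℱ ℓ] ω ≤ B) :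
    ∀ᵐ ω ∂μ, ∃ c,
      Tendsto (fun n => ∑ ℓ ∈ range n, g ℓ ω * (ξ ℓ ω - μ[ξ ℓ | ℱ ℓ] ω)) atTop (𝓝 c) := by
  set f : ℕ → Ω → ℝ := fun n => ∑ ℓ ∈ range n, g ℓ * (ξ ℓ - μ[ξ ℓ | ℱ ℓ])
  have hmart : Martingale f ℱ μ :=
    martingale_sum_mul_sub_condExp hg hgR hξ fun n => (hξ2 n).integrable one_le_two
  have hu2 : ∀ n, MemLp (g n * (ξ n - μ[ξ n | ℱ n])) 2 μ := fun n =>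
    ((hξ2 n).sub ((hξ2 n).condExp one_le_two)).mul (memLp_top_of_bound
      ((hg n).mono (ℱ.le n)).aestronglyMeasurable R (Eventually.of_forall (hgR n)))
  have hf2 : ∀ n, MemLp (f n) 2 μ := fun n => memLp_finsetSum' _ fun ℓ _ => hu2 ℓ
  have hv_int : ∀ n, Integrable (fun ω => g n ω ^ 2 * μ[ξ n ^ 2 | ℱ n] ω) μ := fun n =>
    integrable_condExp.bdd_mul (((hg n).mono (ℱ.le n)).aestronglyMeasurable.pow 2)
      (Eventually.of_forall fun ω => by
        rw [Real.norm_eq_abs, abs_pow]; exact pow_le_pow_left₀ (abs_nonneg _) (hgR n ω) 2)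
  have hL2 : ∀ n, ∫ ω, f n ω ^ 2 ∂μ ≤ ∑ ℓ ∈ range n, ∫ ω, g ℓ ω ^ 2 * μ[ξ ℓ ^ 2 | ℱ ℓ] ω ∂μ := by
    intro n
    induction n with
    | zero => simp [f]
    | succ n ih =>
      have hincr : ∀ ω, f (n + 1) ω - f n ω = g n ω * (ξ n ω - μ[ξ n | ℱ n] ω) := fun ω => by
        simp [f, sum_range_succ]
      rw [hmart.integral_sq_add_one hf2 n, sum_range_succ]
      simp only [hincr]
      linarith [integral_sq_mul_sub_condExp_le (ℱ.le n) (hg n) (hgR n) (hξ2 n)]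
  have hbound : ∀ n, ∫ ω, f n ω ^ 2 ∂μ ≤ μ.real Set.univ * B := fun n =>
    calc ∫ ω, f n ω ^ 2 ∂μ ≤ ∑ ℓ ∈ range n, ∫ ω, g ℓ ω ^ 2 * μ[ξ ℓ ^ 2 | ℱ ℓ] ω ∂μ := hL2 n
      _ = ∫ ω, ∑ ℓ ∈ range n, g ℓ ω ^ 2 * μ[ξ ℓ ^ 2 | ℱ ℓ] ω ∂μ :=
        (integral_finsetSum _ fun ℓ _ => hv_int ℓ).symm
      _ ≤ ∫ _, B ∂μ := integral_mono_ae (integrable_finsetSum _ fun ℓ _ => hv_int ℓ)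
          (integrable_const B) (hB.mono fun ω hω => hω n)
      _ = μ.real Set.univ * B := by simp
  filter_upwards [hmart.exists_ae_tendsto_of_integral_sq_le hf2 hbound] with ω hω
  simpa [f] using hω

-- The weights are built from `|Z j|` so that they are bounded by `1` everywhere, not just a.e.
theorem exists_ae_tendsto_sum_inv_one_add_sum_mul_sub {ξ Z : ℕ → Ω → ℝ} {a C : ℝ} (hC : 0 ≤ C)
    (hξ : ∀ n, StronglyMeasurable[ℱ (n + 1)] (ξ n)) (hξ2 : ∀ n, MemLp (ξ n) 2 μ)
    (hZ : ∀ n, StronglyMeasurable[ℱ n] (Z n)) (hZ0 : ∀ n, 0 ≤ᵐ[μ] Z n)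
    (hmean : ∀ n, μ[ξ n | ℱ n] =ᵐ[μ] a • Z n) (hsecond : ∀ n, μ[ξ n ^ 2 | ℱ n] ≤ᵐ[μ] C • Z n) :
    ∀ᵐ ω ∂μ, ∃ c, Tendsto (fun n => ∑ ℓ ∈ range n,
      (1 + ∑ j ∈ range (ℓ + 1), Z j ω)⁻¹ * (ξ ℓ ω - a * Z ℓ ω)) atTop (𝓝 c) := by
  set g : ℕ → Ω → ℝ := fun n ω => (1 + ∑ j ∈ range (n + 1), |Z j ω|)⁻¹
  have hg : ∀ n, StronglyMeasurable[ℱ n] (g n) := fun n => by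
    have hsum : StronglyMeasurable[ℱ n] fun ω => ∑ j ∈ range (n + 1), |Z j ω| :=
      Finset.stronglyMeasurable_fun_sum _ fun j hj =>
        ((hZ j).mono (ℱ.mono (Nat.lt_succ_iff.1 (mem_range.1 hj)))).norm
    exact (hsum.measurable.const_add 1).inv.stronglyMeasurable
  have hB : ∀ᵐ ω ∂μ, ∀ n, ∑ ℓ ∈ range n, g ℓ ω ^ 2 * μ[ξ ℓ ^ 2 | ℱ ℓ] ω ≤ C := by
    filter_upwards [ae_all_iff.2 hsecond, ae_all_iff.2 hZ0] with ω h2 hZω n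
    calc ∑ ℓ ∈ range n, g ℓ ω ^ 2 * μ[ξ ℓ ^ 2 | ℱ ℓ] ω
        ≤ ∑ ℓ ∈ range n, g ℓ ω ^ 2 * (C * Z ℓ ω) :=
          sum_le_sum fun ℓ _ => mul_le_mul_of_nonneg_left (h2 ℓ) (sq_nonneg _)
      _ = C * ∑ ℓ ∈ range n, ((1 + ∑ j ∈ range (ℓ + 1), Z j ω)⁻¹) ^ 2 * Z ℓ ω := by
          simp only [g, abs_of_nonneg (hZω _), mul_sum]
          exact sum_congr rfl fun ℓ _ => by ring
      _ ≤ C := mul_le_of_le_one_right hC (sum_range_inv_one_add_sum_sq_mul_le_one hZω n)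
  filter_upwards [exists_ae_tendsto_sum_mul_sub_condExp hg
      (fun n ω => abs_inv_one_add_sum_abs_le_one (Z · ω) _) hξ hξ2 hB,
    ae_all_iff.2 hmean, ae_all_iff.2 hZ0] with ω ⟨c, hc⟩ hmeanω hZω
  refine ⟨c, ?_⟩
  simpa only [g, hmeanω, abs_of_nonneg (hZω _), Pi.smul_apply, smul_eq_mul] using hc

end Martingale

theorem condExp_mul_comp_ae_eq_integral_smul_of_indep {Ω : Type*} {m m0 : MeasurableSpace Ω}
    {μ : Measure Ω} [IsFiniteMeasure μ] (hm : m ≤ m0) {X Y : Ω → ℝ}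
    {R : ℝ} (hX : Measurable X) (hXR : ∀ ω, |X ω| ≤ R) (hY : Measurable Y)
    (hind : Indep (MeasurableSpace.comap Y Real.measurableSpace)
      (m ⊔ MeasurableSpace.comap X Real.measurableSpace) μ)
    {φ : ℝ → ℝ} (hφ : Measurable φ) (hφY : Integrable (φ ∘ Y) μ) :
    μ[X * (φ ∘ Y) | m] =ᵐ[μ] (∫ ω, φ (Y ω) ∂μ) • μ[X | m] := by
  set m₂ := m ⊔ MeasurableSpace.comap X Real.measurableSpace
  have hle₂ : m₂ ≤ m0 := sup_le hm (measurable_iff_comap_le.1 hX)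
  have hXm₂ : StronglyMeasurable[m₂] X :=
    ((comap_measurable X).mono (le_sup_right (a := m)) le_rfl).stronglyMeasurable
  have hinner : μ[X * (φ ∘ Y) | m₂] =ᵐ[μ] (∫ ω, φ (Y ω) ∂μ) • X := by
    filter_upwards [condExp_stronglyMeasurable_mul_of_bound hle₂ hXm₂ hφY R
      (Eventually.of_forall hXR), condExp_indep_eq (measurable_iff_comap_le.1 hY) hle₂
        (hφ.comp (comap_measurable Y)).stronglyMeasurable hind] with ω h1 h2
    simp [h1, h2, mul_comm]
  calc μ[X * (φ ∘ Y) | m] =ᵐ[μ] μ[μ[X * (φ ∘ Y) | m₂] | m] :=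
        (condExp_condExp_of_le le_sup_left hle₂).symm
    _ =ᵐ[μ] μ[(∫ ω, φ (Y ω) ∂μ) • X | m] := condExp_congr_ae hinner
    _ =ᵐ[μ] (∫ ω, φ (Y ω) ∂μ) • μ[X | m] := condExp_smul _ _ _

/-- Adaptive law of large numbers (Lemma on adaptive sampling).  Sequences are
0-indexed: `Y n`, `X n` play the roles of the paper's `Y_{n+1}`, `X_{n+1}`,
which are adapted to `ℋ_{n+1} = ℱ (n+1)`; `Z n = 𝐏(X_{n+1} = 1 | ℋ_n)`.
With probability 1: on the event `Σ Z_ℓ = ∞`, the ratio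
`(Σ_{ℓ≤n} X_ℓ Y_ℓ)/(Σ_{ℓ≤n} Z_ℓ)` converges to `𝐄[Y₁]`; on the event
`Σ Z_ℓ < ∞`, `sup_n |Σ_{ℓ≤n} X_ℓ Y_ℓ| < ∞`. -/
theorem stmt_10 {Ω : Type*} [m0 : MeasurableSpace Ω] (μ : Measure Ω)
    [IsProbabilityMeasure μ] (ℱ : Filtration ℕ m0) (Y X : ℕ → Ω → ℝ)
    (hYdist : ∀ n, Measure.map (Y n) μ = Measure.map (Y 0) μ)
    (hYL2 : ∀ n, MemLp (Y n) 2 μ)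
    (hYadapted : ∀ n, StronglyMeasurable[ℱ (n + 1)] (Y n))
    (hXadapted : ∀ n, StronglyMeasurable[ℱ (n + 1)] (X n))
    (hX01 : ∀ n ω, X n ω = 0 ∨ X n ω = 1)
    (hindep : ∀ n, Indep (MeasurableSpace.comap (Y n) Real.measurableSpace)
      (ℱ n ⊔ MeasurableSpace.comap (X n) Real.measurableSpace) μ)
    (Z : ℕ → Ω → ℝ)
    (hZ : ∀ n, Z n = μ[Set.indicator {ω | X n ω = 1} (fun _ => (1 : ℝ)) | ℱ n]) :
    ∀ᵐ ω ∂μ,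
      (Tendsto (fun n => ∑ ℓ ∈ Finset.range n, Z ℓ ω) atTop atTop →
        Tendsto (fun n => (∑ ℓ ∈ Finset.range n, X ℓ ω * Y ℓ ω) /
            (∑ ℓ ∈ Finset.range n, Z ℓ ω)) atTop (nhds (∫ ω', Y 0 ω' ∂μ))) ∧
      ((∃ L : ℝ, Tendsto (fun n => ∑ ℓ ∈ Finset.range n, Z ℓ ω) atTop (nhds L)) →
        ∃ B : ℝ, ∀ n, |∑ ℓ ∈ Finset.range n, X ℓ ω * Y ℓ ω| ≤ B) := by
  have hYm : ∀ n, Measurable (Y n) := fun n => (hYadapted n).measurable.mono (ℱ.le _) le_rfl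
  have hXm : ∀ n, Measurable (X n) := fun n => (hXadapted n).measurable.mono (ℱ.le _) le_rfl
  have hXabs : ∀ n ω, |X n ω| ≤ 1 := fun n ω => by rcases hX01 n ω with h | h <;> simp [h]
  have hcondX : ∀ n, μ[X n | ℱ n] = Z n := fun n => by
    rw [hZ n]; congr 1; ext ω; rcases hX01 n ω with h | h <;> simp [h]
  have hmoment : ∀ n {φ : ℝ → ℝ}, Measurable φ → Integrable (φ ∘ Y n) μ →
      μ[X n * (φ ∘ Y n) | ℱ n] =ᵐ[μ] (∫ ω, φ (Y 0 ω) ∂μ) • Z n := fun n φ hφ hφint => by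
    have hident : IdentDistrib (Y n) (Y 0) μ μ :=
      ⟨(hYm n).aemeasurable, (hYm 0).aemeasurable, hYdist n⟩
    rw [← hcondX n, show (∫ ω, φ (Y 0 ω) ∂μ) = ∫ ω, φ (Y n ω) ∂μ from
      ((hident.comp hφ).integral_eq).symm]
    exact condExp_mul_comp_ae_eq_integral_smul_of_indep (ℱ.le n) (hXm n) (hXabs n) (hYm n)
      (hindep n) hφ hφint
  have hsq : ∀ n, (X n * Y n) ^ 2 = X n * ((· ^ 2) ∘ Y n) := fun n => by
    ext ω; rcases hX01 n ω with h | h <;> simp [h]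
  have hZ0 : ∀ n, 0 ≤ᵐ[μ] Z n := fun n =>
    hZ n ▸ condExp_nonneg (Eventually.of_forall (Set.indicator_nonneg fun _ _ => zero_le_one))
  filter_upwards [exists_ae_tendsto_sum_inv_one_add_sum_mul_sub
      (integral_nonneg fun ω => sq_nonneg (Y 0 ω)) (fun n => (hXadapted n).mul (hYadapted n))
      (fun n => (hYL2 n).mul (memLp_top_of_bound (hXm n).aestronglyMeasurable 1
        (Eventually.of_forall (hXabs n))))
      (fun n => hZ n ▸ stronglyMeasurable_condExp) hZ0
      (fun n => hmoment n measurable_id ((hYL2 n).integrable one_le_two))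
      (fun n => hsq n ▸ (hmoment n (measurable_id.pow_const 2) (hYL2 n).integrable_sq).le),
    ae_all_iff.2 hZ0] with ω ⟨c, hw⟩ hZω
  exact ⟨tendsto_sum_div_sum_of_tendsto_sum_inv_mul hZω hw,
    fun ⟨L, hL⟩ => exists_abs_sum_le_of_tendsto_sum_inv_mul hZω hw hL⟩
end

section
/- Let k ≥ 2, let I* ∈ {1, …, k}, and let (ψ_n)_{n ≥ 1} be a sequence of nonnegative vectors in ℝᵏ with Σ_{i=1}^{k} ψ_{n,i} = 1 for every n. Define the running averages ψ̄_{n,i} := (1/n)·Σ_{ℓ=1}^{n} ψ_{ℓ,i}. Let ψ* ∈ ℝᵏ be a nonnegative vector with Σ_{i=1}^{k} ψ*_i = 1. If ψ̄_{n,I*} → ψ*_{I*} as n → ∞, and for every j ≠ I* and every δ > 0 the series Σ_{n=1}^{∞} ψ_{n,j}·𝟙[ψ̄_{n,j} ≥ ψ*_j + δ] is finite, then ψ̄_{n,i} → ψ*_i as n → ∞ for every i ∈ {1, …, k}. -/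
/-!
Write `S n = ∑_{ℓ < n} ψ ℓ` and `c = ψ*_j + δ`. A term `ψ ℓ` left out of the series has
`S (ℓ + 1) < c (ℓ + 1)`, so by induction `S n ≤ c n + F` with `F` the sum of the series; hence
every average `ψ̄_{n,j}` is eventually below `ψ*_j + ε`, and so is `ψ̄_{n,I*}` by assumption.
The averages sum to `1 = ∑ ψ*_i`, and upper bounds on every coordinate of vectors whose sum
converges to the right total force each coordinate to converge.
-/

open Filter Topology Finset

theorem sum_range_le_mul_add_sum_indicator {ψ : ℕ → ℝ} (hψ : ∀ n, 0 ≤ ψ n) {c : ℝ}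
    (hc : 0 ≤ c) (n : ℕ) :
    ∑ ℓ ∈ range n, ψ ℓ ≤ c * n + ∑ ℓ ∈ range n,
      Set.indicator {m : ℕ | c ≤ (∑ ℓ ∈ range (m + 1), ψ ℓ) / (m + 1)} ψ ℓ := by
  set f := Set.indicator {m : ℕ | c ≤ (∑ ℓ ∈ range (m + 1), ψ ℓ) / (m + 1)} ψ
  induction n with
  | zero => simp
  | succ n ih =>
    have hf : ∀ m, 0 ≤ f m := Set.indicator_nonneg fun m _ => hψ m
    rw [sum_range_succ, sum_range_succ]
    push_cast
    by_cases hn : c ≤ (∑ ℓ ∈ range (n + 1), ψ ℓ) / (n + 1)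
    · have hfn : f n = ψ n := if_pos hn
      linarith
    · have hbelow : ∑ ℓ ∈ range (n + 1), ψ ℓ < c * (n + 1) := by
        rw [not_le, div_lt_iff₀ (by positivity)] at hn
        exact hn
      rw [sum_range_succ] at hbelow
      linarith [sum_nonneg fun m (_ : m ∈ range n) => hf m, hf n]

theorem eventually_avg_lt_of_summable_indicator {ψ : ℕ → ℝ} (hψ : ∀ n, 0 ≤ ψ n) {c δ : ℝ}
    (hc : 0 ≤ c) (hδ : 0 < δ)
    (hsum : Summable
      (Set.indicator {m : ℕ | c ≤ (∑ ℓ ∈ range (m + 1), ψ ℓ) / (m + 1)} ψ)) :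
    ∀ᶠ n in atTop, (∑ ℓ ∈ range n, ψ ℓ) / n < c + δ := by
  set f := Set.indicator {m : ℕ | c ≤ (∑ ℓ ∈ range (m + 1), ψ ℓ) / (m + 1)} ψ
  have hf : ∀ m, 0 ≤ f m := Set.indicator_nonneg fun m _ => hψ m
  have hsmall : ∀ᶠ n : ℕ in atTop, (∑' m, f m) / n < δ :=
    (tendsto_const_div_atTop_nhds_zero_nat _).eventually_lt_const hδ
  filter_upwards [hsmall, eventually_gt_atTop 0] with n hn hpos
  have hpos' : (0 : ℝ) < n := by exact_mod_cast hpos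
  calc (∑ ℓ ∈ range n, ψ ℓ) / n
      ≤ (c * n + ∑' m, f m) / n := by
        gcongr
        exact (sum_range_le_mul_add_sum_indicator hψ hc n).trans
          (add_le_add_right (hsum.sum_le_tsum _ fun m _ => hf m) _)
    _ = c + (∑' m, f m) / n := by field_simp
    _ < c + δ := by linarith

theorem tendsto_posPart_sub_of_eventually_lt {α : Type*} {l : Filter α} {u : α → ℝ} {b : ℝ}
    (hu : ∀ ε > 0, ∀ᶠ x in l, u x < b + ε) :
    Tendsto (fun x => max (u x - b) 0) l (𝓝 0) := by
  rw [tendsto_order]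
  refine ⟨fun a ha => Eventually.of_forall fun x => ha.trans_le (le_max_right _ _), ?_⟩
  intro a ha
  filter_upwards [hu a ha] with x hx
  exact max_lt (by linarith) ha

theorem tendsto_of_eventually_lt_of_tendsto_sum {α ι : Type*} [Fintype ι] [DecidableEq ι]
    {l : Filter α} {a : α → ι → ℝ} {b : ι → ℝ}
    (hupper : ∀ i, ∀ ε > 0, ∀ᶠ x in l, a x i < b i + ε)
    (hsum : Tendsto (fun x => ∑ i, a x i) l (𝓝 (∑ i, b i))) (i : ι) :
    Tendsto (fun x => a x i) l (𝓝 (b i)) := by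
  set e := fun x j => max (a x j - b j) 0
  have he : ∀ j, Tendsto (fun x => e x j) l (𝓝 0) := fun j =>
    tendsto_posPart_sub_of_eventually_lt (hupper j)
  have hlower : Tendsto (fun x => b i + (∑ j, a x j - ∑ j, b j) - ∑ j ∈ univ.erase i, e x j)
      l (𝓝 (b i)) := by
    simpa only [sub_self, add_zero, sum_const_zero, sub_zero] using
      (tendsto_const_nhds (x := b i)).add (hsum.sub_const (∑ j, b j)) |>.sub
        (tendsto_finsetSum (univ.erase i) fun j _ => he j)
  have hupper' : Tendsto (fun x => b i + e x i) l (𝓝 (b i)) := by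
    simpa using tendsto_const_nhds.add (he i)
  refine tendsto_of_tendsto_of_tendsto_of_le_of_le hlower hupper' (fun x => ?_) fun x => ?_
  · have hsplit : ∑ j, a x j - ∑ j, b j = (a x i - b i) + ∑ j ∈ univ.erase i, (a x j - b j) := by
      rw [← sum_sub_distrib]
      exact (add_sum_erase univ (fun j => a x j - b j) (mem_univ i)).symm
    have hrest : ∑ j ∈ univ.erase i, (a x j - b j) ≤ ∑ j ∈ univ.erase i, e x j :=
      sum_le_sum fun j _ => le_max_left _ _
    linarith
  · simp only [e]
    linarith [le_max_left (a x i - b i) 0]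

theorem sum_avg_eq_one {ι : Type*} [Fintype ι] {ψ : ℕ → ι → ℝ} (hsum : ∀ n, ∑ i, ψ n i = 1)
    {n : ℕ} (hn : n ≠ 0) :
    ∑ i, (∑ ℓ ∈ range n, ψ ℓ i) / n = 1 := by
  rw [← sum_div, sum_comm]
  simp [hsum, hn]

theorem stmt_11_general (k : ℕ) (Istar : Fin k)
    (ψ : ℕ → Fin k → ℝ) (hnn : ∀ n i, 0 ≤ ψ n i) (hsum : ∀ n, (∑ i, ψ n i) = 1)
    (ψstar : Fin k → ℝ) (hsnn : ∀ i, 0 ≤ ψstar i) (hssum : (∑ i, ψstar i) = 1)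
    (hconv : Tendsto (fun n : ℕ => (∑ ℓ ∈ Finset.range n, ψ ℓ Istar) / n)
      atTop (nhds (ψstar Istar)))
    (hfin : ∀ j, j ≠ Istar → ∀ δ : ℝ, 0 < δ →
      Summable (fun n : ℕ =>
        Set.indicator {m : ℕ | ψstar j + δ ≤ (∑ ℓ ∈ Finset.range (m + 1), ψ ℓ j) / (m + 1)}
          (fun m => ψ m j) n)) :
    ∀ i, Tendsto (fun n : ℕ => (∑ ℓ ∈ Finset.range n, ψ ℓ i) / n)
      atTop (nhds (ψstar i)) := by
  have hupper : ∀ j, ∀ ε > 0, ∀ᶠ n : ℕ in atTop,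
      (∑ ℓ ∈ range n, ψ ℓ j) / n < ψstar j + ε := by
    intro j ε hε
    by_cases hj : j = Istar
    · subst hj
      exact hconv.eventually_lt_const (by linarith)
    · have hc : 0 ≤ ψstar j + ε / 2 := by linarith [hsnn j]
      filter_upwards [eventually_avg_lt_of_summable_indicator (fun n => hnn n j) hc
        (half_pos hε) (hfin j hj _ (half_pos hε))] with n hn
      linarith
  have htotal : Tendsto (fun n : ℕ => ∑ j, (∑ ℓ ∈ range n, ψ ℓ j) / n) atTop
      (𝓝 (∑ j, ψstar j)) := by
    rw [hssum]
    refine tendsto_const_nhds.congr' ?_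
    filter_upwards [eventually_ne_atTop 0] with n hn
    exact (sum_avg_eq_one hsum hn).symm
  exact tendsto_of_eventually_lt_of_tendsto_sum hupper htotal

/-- Sufficient condition for convergence of average allocations.  Sequences
are 0-indexed: `ψ n` is the paper's `ψ_{n+1}` and the running average
`ψ̄_{n} = (1/n) Σ_{ℓ=1}^{n} ψ_ℓ` is `(Σ_{ℓ ∈ range n} ψ ℓ i)/n`; the term
`ψ_{n,j}` is paired with the average `ψ̄_{n,j}` that includes it, i.e. with
index `n + 1`.  If `ψ̄_{n,I*} → ψ*_{I*}` and, for every `j ≠ I*` and `δ > 0`,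
`Σ_n ψ_{n,j}·𝟙[ψ̄_{n,j} ≥ ψ*_j + δ] < ∞`, then `ψ̄_{n,i} → ψ*_i` for all `i`. -/
theorem stmt_11 (k : ℕ) (hk : 2 ≤ k) (Istar : Fin k)
    (ψ : ℕ → Fin k → ℝ) (hnn : ∀ n i, 0 ≤ ψ n i) (hsum : ∀ n, (∑ i, ψ n i) = 1)
    (ψstar : Fin k → ℝ) (hsnn : ∀ i, 0 ≤ ψstar i) (hssum : (∑ i, ψstar i) = 1)
    (hconv : Tendsto (fun n : ℕ => (∑ ℓ ∈ Finset.range n, ψ ℓ Istar) / n)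
      atTop (nhds (ψstar Istar)))
    (hfin : ∀ j, j ≠ Istar → ∀ δ : ℝ, 0 < δ →
      Summable (fun n : ℕ =>
        Set.indicator {m : ℕ | ψstar j + δ ≤ (∑ ℓ ∈ Finset.range (m + 1), ψ ℓ j) / (m + 1)}
          (fun m => ψ m j) n)) :
    ∀ i, Tendsto (fun n : ℕ => (∑ ℓ ∈ Finset.range n, ψ ℓ i) / n)
      atTop (nhds (ψstar i)) :=
  stmt_11_general k Istar ψ hnn hsum ψstar hsnn hssum hconv hfin
end

section
/- Let Θ̃ be a nonempty bounded open subset of ℝᵏ, and let (W_n)_{n ≥ 1} be a sequence of continuous functions from the closure of Θ̃ to [0, ∞) that is uniformly equicontinuous in the following sense: for every ε > 0 there exists δ > 0 such that for all n and all θ, θ' in the closure of Θ̃ with ‖θ - θ'‖_∞ ≤ δ, one has |W_n(θ) - W_n(θ')| ≤ ε. Then (1/n)·log( ∫_{Θ̃} exp(-n·W_n(θ)) dθ ) + inf_{θ ∈ Θ̃} W_n(θ) → 0 as n → ∞, where the integral is with respect to Lebesgue measure on ℝᵏ. -/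
/-!
Let `m_n` be the infimum of `W_n` on `U`. Bounding the integrand by `e^{-n m_n}` gives
`(1/n) log ∫_U e^{-n W_n} + m_n ≤ (log |U|) / n`. Conversely, if `δ` is an equicontinuity modulus
for `ε` and `W_n(x_n) < m_n + ε`, then `W_n ≤ m_n + 2ε` on `U ∩ B(x_n, δ)`. By compactness of the
closure of `U`, these sets have volume at least some `c > 0` independent of `n`, so
`(1/n) log ∫_U e^{-n W_n} + m_n ≥ (log c) / n - 2ε`.
-/

open MeasureTheory Filter Metric Real Set
open scoped ENNReal Topology

section LaplaceBounds

variable {α : Type*} [MeasurableSpace α] {μ : Measure α} {s S : Set α} {f : α → ℝ} {t m M c : ℝ}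

theorem integrableOn_exp_neg_mul (hs : MeasurableSet s) (hμs : μ s ≠ ∞)
    (hf : AEStronglyMeasurable f (μ.restrict s)) (ht : 0 ≤ t) (hm : ∀ x ∈ s, m ≤ f x) :
    IntegrableOn (fun x => exp (-t * f x)) s μ := by
  refine ⟨continuous_exp.comp_aestronglyMeasurable (hf.const_mul (-t)),
    .restrict_of_bounded (C := exp (-t * m)) hμs.lt_top ?_⟩
  filter_upwards [ae_restrict_mem hs] with x hx
  rw [norm_of_nonneg (exp_pos _).le, exp_le_exp]
  nlinarith [hm x hx]

theorem setIntegral_exp_neg_mul_le (hμs : μ s ≠ ∞) (ht : 0 ≤ t) (hm : ∀ x ∈ s, m ≤ f x) :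
    ∫ x in s, exp (-t * f x) ∂μ ≤ μ.real s * exp (-t * m) :=
  calc ∫ x in s, exp (-t * f x) ∂μ ≤ ‖∫ x in s, exp (-t * f x) ∂μ‖ := le_abs_self _
    _ ≤ exp (-t * m) * μ.real s := norm_setIntegral_le_of_norm_le_const hμs.lt_top fun x hx => by
        rw [norm_of_nonneg (exp_pos _).le, exp_le_exp]
        nlinarith [hm x hx]
    _ = μ.real s * exp (-t * m) := mul_comm _ _

theorem measureReal_mul_exp_neg_mul_le_setIntegral (hS : MeasurableSet S) (hSs : S ⊆ s)
    (hμS : μ S ≠ ∞) (hint : IntegrableOn (fun x => exp (-t * f x)) s μ) (ht : 0 ≤ t)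
    (hM : ∀ x ∈ S, f x ≤ M) :
    μ.real S * exp (-t * M) ≤ ∫ x in s, exp (-t * f x) ∂μ :=
  calc μ.real S * exp (-t * M) ≤ ∫ x in S, exp (-t * f x) ∂μ :=
        setIntegral_ge_of_const_le hS hμS
          (fun x hx => exp_le_exp.2 (by nlinarith [hM x hx])) (hint.mono_set hSs)
    _ ≤ ∫ x in s, exp (-t * f x) ∂μ :=
        setIntegral_mono_set hint (ae_of_all _ fun _ => (exp_pos _).le) hSs.eventuallyLE

theorem one_div_mul_log_setIntegral_exp_neg_mul_add_le (hμs : μ s ≠ ∞) (ht : 0 < t)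
    (hI : 0 < ∫ x in s, exp (-t * f x) ∂μ) (hm : ∀ x ∈ s, m ≤ f x) :
    1 / t * log (∫ x in s, exp (-t * f x) ∂μ) + m ≤ log (μ.real s) / t := by
  have hle := setIntegral_exp_neg_mul_le hμs ht.le hm
  have hμs_pos : 0 < μ.real s := pos_of_mul_pos_left (hI.trans_le hle) (exp_pos _).le
  have hlog : log (∫ x in s, exp (-t * f x) ∂μ) + t * m ≤ log (μ.real s) := by
    have := log_le_log hI hle
    rw [log_mul hμs_pos.ne' (exp_pos _).ne', log_exp] at this
    linarith
  calc 1 / t * log (∫ x in s, exp (-t * f x) ∂μ) + m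
      = (log (∫ x in s, exp (-t * f x) ∂μ) + t * m) / t := by field_simp
    _ ≤ log (μ.real s) / t := div_le_div_of_nonneg_right hlog ht.le

theorem log_div_sub_le_one_div_mul_log_setIntegral_exp_neg_mul (hS : MeasurableSet S)
    (hSs : S ⊆ s) (hint : IntegrableOn (fun x => exp (-t * f x)) s μ) (ht : 0 < t)
    (hc : 0 < c) (hcS : c ≤ μ.real S) (hM : ∀ x ∈ S, f x ≤ M) :
    log c / t - M ≤ 1 / t * log (∫ x in s, exp (-t * f x) ∂μ) := by
  have hμS : μ S ≠ ∞ := fun h => by simp [measureReal_def, h] at hcS; linarith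
  have hle : c * exp (-t * M) ≤ ∫ x in s, exp (-t * f x) ∂μ :=
    (mul_le_mul_of_nonneg_right hcS (exp_pos _).le).trans
      (measureReal_mul_exp_neg_mul_le_setIntegral hS hSs hμS hint ht.le hM)
  have hlog : log c - t * M ≤ log (∫ x in s, exp (-t * f x) ∂μ) := by
    have := log_le_log (by positivity) hle
    rwa [log_mul hc.ne' (exp_pos _).ne', log_exp, neg_mul, ← sub_eq_add_neg] at this
  calc log c / t - M = 1 / t * (log c - t * M) := by field_simp
    _ ≤ 1 / t * log (∫ x in s, exp (-t * f x) ∂μ) := by gcongr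

end LaplaceBounds

theorem exists_pos_le_measureReal_inter_ball {X : Type*} [PseudoMetricSpace X] [MeasurableSpace X]
    [OpensMeasurableSpace X] (μ : Measure X) [μ.IsOpenPosMeasure] {U : Set X} (hne : U.Nonempty)
    (hU : IsOpen U) (hK : IsCompact (closure U)) (hμU : μ U ≠ ∞) {δ : ℝ} (hδ : 0 < δ) :
    ∃ c : ℝ, 0 < c ∧ ∀ x ∈ closure U, c ≤ μ.real (U ∩ ball x δ) := by
  obtain ⟨T, hTU, hTfin, hcover⟩ := hK.finite_cover_balls (half_pos hδ)
  have hTne : T.Nonempty := by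
    obtain ⟨x, hx⟩ := hne
    obtain ⟨y, hy, -⟩ := mem_iUnion₂.1 (hcover (subset_closure hx))
    exact ⟨y, hy⟩
  obtain ⟨y₀, hy₀, hmin⟩ := T.exists_min_image (fun y => μ.real (U ∩ ball y (δ / 2))) hTfin hTne
  refine ⟨μ.real (U ∩ ball y₀ (δ / 2)), ?_, fun x hx => ?_⟩
  · obtain ⟨z, hz⟩ := mem_closure_iff.1 (hTU hy₀) _ isOpen_ball (mem_ball_self (half_pos hδ))
    exact ENNReal.toReal_pos ((hU.inter isOpen_ball).measure_pos μ ⟨z, hz.2, hz.1⟩).ne'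
      (measure_ne_top_of_subset inter_subset_left hμU)
  · obtain ⟨y, hy, hxy⟩ := mem_iUnion₂.1 (hcover hx)
    refine (hmin y hy).trans (measureReal_mono (inter_subset_inter_right _ ?_)
      (measure_ne_top_of_subset inter_subset_left hμU))
    exact ball_subset_ball' (by linarith [mem_ball'.1 hxy])

theorem tendsto_one_div_mul_log_setIntegral_exp_neg_mul_add_sInf {X : Type*} [PseudoMetricSpace X]
    [MeasurableSpace X] [OpensMeasurableSpace X] (μ : Measure X) [μ.IsOpenPosMeasure]
    {U : Set X} (hne : U.Nonempty) (hU : IsOpen U) (hK : IsCompact (closure U)) (hμU : μ U ≠ ∞)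
    {W : ℕ → X → ℝ} (hWcont : ∀ n, ContinuousOn (W n) U) (hWbdd : ∀ n, BddBelow (W n '' U))
    (hequi : ∀ ε > 0, ∃ δ > 0, ∀ n, ∀ x ∈ U, ∀ y ∈ U, dist x y < δ → |W n x - W n y| ≤ ε) :
    Tendsto (fun n : ℕ => 1 / (n : ℝ) * log (∫ x in U, exp (-(n : ℝ) * W n x) ∂μ) +
      sInf (W n '' U)) atTop (𝓝 0) := by
  have hm : ∀ n, ∀ x ∈ U, sInf (W n '' U) ≤ W n x :=
    fun n x hx => csInf_le (hWbdd n) (mem_image_of_mem _ hx)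
  have hint : ∀ n : ℕ, IntegrableOn (fun x => exp (-(n : ℝ) * W n x)) U μ := fun n =>
    integrableOn_exp_neg_mul hU.measurableSet hμU
      ((hWcont n).aestronglyMeasurable hU.measurableSet) n.cast_nonneg (hm n)
  refine tendsto_order.2 ⟨fun a ha => ?_, fun a ha => ?_⟩
  · obtain ⟨δ, hδ, hWδ⟩ := hequi (-a / 4) (by linarith)
    obtain ⟨c, hc, hcU⟩ := exists_pos_le_measureReal_inter_ball μ hne hU hK hμU hδ
    filter_upwards [(tendsto_const_div_atTop_nhds_zero_nat (log c)).eventually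
      (lt_mem_nhds (by linarith : a / 2 < 0)), eventually_gt_atTop 0] with n hlogc hn
    obtain ⟨_, ⟨x₀, hx₀, rfl⟩, hx₀m⟩ := exists_lt_of_csInf_lt (hne.image (W n))
      (lt_add_of_pos_right (sInf (W n '' U)) (by linarith : 0 < -a / 4))
    have hball : ∀ x ∈ U ∩ ball x₀ δ, W n x ≤ sInf (W n '' U) + -a / 4 + -a / 4 := fun x hx =>
      by linarith [(abs_le.1 (hWδ n x hx.1 x₀ hx₀ (mem_ball.1 hx.2))).2]
    have := log_div_sub_le_one_div_mul_log_setIntegral_exp_neg_mul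
      (hU.inter isOpen_ball).measurableSet inter_subset_left (hint n) (Nat.cast_pos.2 hn) hc
      (hcU x₀ (subset_closure hx₀)) hball
    linarith
  · filter_upwards [(tendsto_const_div_atTop_nhds_zero_nat (log (μ.real U))).eventually
      (gt_mem_nhds ha), eventually_gt_atTop 0] with n hlogU hn
    have hI : 0 < ∫ x in U, exp (-(n : ℝ) * W n x) ∂μ := by
      have : NeZero (μ.restrict U) :=
        ⟨by simpa [Measure.restrict_eq_zero] using (hU.measure_pos μ hne).ne'⟩
      exact integral_exp_pos (hint n)
    exact (one_div_mul_log_setIntegral_exp_neg_mul_add_le hμU (Nat.cast_pos.2 hn) hI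
      (hm n)).trans_lt hlogU

/-- Laplace-type approximation: for a nonempty bounded open `Θ̃ ⊆ ℝᵏ` and a
uniformly equicontinuous sequence of continuous nonnegative functions `W_n` on
the closure of `Θ̃`,
`(1/n)·log(∫_{Θ̃} e^{-n W_n(θ)} dθ) + inf_{θ ∈ Θ̃} W_n(θ) → 0`.
(The norm on `Fin k → ℝ` is the supremum norm; the integral is with respect to
Lebesgue measure on `ℝᵏ`.) -/
theorem stmt_14 {k : ℕ} (Θt : Set (Fin k → ℝ)) (hne : Θt.Nonempty)
    (hopen : IsOpen Θt) (hbdd : Bornology.IsBounded Θt)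
    (W : ℕ → (Fin k → ℝ) → ℝ)
    (hWcont : ∀ n, ContinuousOn (W n) (closure Θt))
    (hWnn : ∀ n, ∀ θ ∈ closure Θt, 0 ≤ W n θ)
    (hequi : ∀ ε : ℝ, 0 < ε → ∃ δ : ℝ, 0 < δ ∧ ∀ n : ℕ,
      ∀ θ ∈ closure Θt, ∀ θ' ∈ closure Θt, ‖θ - θ'‖ ≤ δ → |W n θ - W n θ'| ≤ ε) :
    Tendsto (fun n : ℕ =>
      (1 / (n : ℝ)) * Real.log (∫ θ in Θt, Real.exp (-(n : ℝ) * W n θ)) +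
        sInf (W n '' Θt)) atTop (nhds 0) := by
  have hK : IsCompact (closure Θt) := hbdd.isCompact_closure
  refine tendsto_one_div_mul_log_setIntegral_exp_neg_mul_add_sInf volume hne hopen hK
    (measure_ne_top_of_subset subset_closure hK.measure_lt_top.ne)
    (fun n => (hWcont n).mono subset_closure)
    (fun n => ⟨0, by rintro _ ⟨θ, hθ, rfl⟩; exact hWnn n θ (subset_closure hθ)⟩) fun ε hε => ?_
  obtain ⟨δ, hδ, hWδ⟩ := hequi ε hε
  exact ⟨δ, hδ, fun n θ hθ θ' hθ' hdist => hWδ n θ (subset_closure hθ) θ' (subset_closure hθ')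
    (by rw [← dist_eq_norm]; exact hdist.le)⟩
end

section
/- Let θ̲ < θ̄ and let A : ℝ → ℝ be differentiable with sup_{θ ∈ [θ̲, θ̄]} |A'(θ)| < ∞, and fix θ* ∈ [θ̲, θ̄]. Let (Ω, ℱ, 𝐏) be a probability space with filtration (ℱ_n)_{n ≥ 1}; let (ξ_n)_{n ≥ 1} be identically distributed, square-integrable real random variables adapted to (ℱ_n) with 𝐄[ξ₁] = 0, let (X_n)_{n ≥ 1} be {0,1}-valued random variables adapted to (ℱ_n), and suppose that for each n, ξ_n is independent of the σ-algebra generated by ℱ_{n-1} together with X_n. Define ψ_n := 𝐏(X_n = 1 | ℱ_{n-1}), Ψ_n := Σ_{ℓ=1}^{n} ψ_ℓ, and for θ ∈ [θ̲, θ̄] define Λ_n(θ) := Σ_{ℓ=1}^{n} X_ℓ·( d(θ*, θ) + (θ* - θ)·ξ_ℓ ) (the log-likelihood ratio of θ* against θ in the exponential family). Then with probability 1: (i) on the event that Ψ_n → ∞, sup_{θ ∈ [θ̲, θ̄]} Ψ_n^{-1}·| Λ_n(θ) - Ψ_n·d(θ*, θ) | → 0 as n → ∞; and (ii) on the event that lim_{n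 → ∞} Ψ_n < ∞, sup_{θ ∈ [θ̲, θ̄]} sup_{n} ( |Λ_n(θ)| + Ψ_n·d(θ*, θ) ) < ∞. -/
/-!
Write `S_n = ∑ X_ℓ`, `T_n = ∑ X_ℓ ξ_ℓ`. Then
`Λ_n(θ) - Ψ_n d(θ*, θ) = d(θ*, θ) (S_n - Ψ_n) + (θ* - θ) T_n`, and `d(θ*, ·)` is bounded on
`[θ̲, θ̄]`, so everything reduces to the two sequences `S_n - Ψ_n` and `T_n`.

With the predictable weights `w_ℓ = (1 + Ψ_ℓ)⁻¹`, the sums `∑ w_ℓ (X_ℓ - ψ_ℓ)` and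
`∑ w_ℓ X_ℓ ξ_ℓ` are martingales whose increments have second moments bounded by a multiple of
`𝔼[w_ℓ² ψ_ℓ]`, and `∑ ψ_ℓ / (1 + Ψ_ℓ)² ≤ 2` pathwise. Being bounded in `L²` they converge a.s.,
and Kronecker's lemma turns this into `S_n - Ψ_n = o(Ψ_n)` and `T_n = o(Ψ_n)` where `Ψ_n → ∞`.
Where `Ψ_n` stays bounded, Lévy's extension of the Borel–Cantelli lemma shows that only finitely
many `X_n` are nonzero, so `Λ_n(θ)` is a fixed finite sum for large `n`.
-/

open MeasureTheory ProbabilityTheory Filter Topology Finset Asymptotics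

theorem isLittleO_sum_range_of_tendsto_sum_div {a b : ℕ → ℝ} (hb : ∀ n, 0 < b n)
    (hmono : Monotone b) (htop : Tendsto b atTop atTop) {c : ℝ}
    (hc : Tendsto (fun n => ∑ ℓ ∈ range n, a ℓ / b ℓ) atTop (𝓝 c)) :
    (fun n => ∑ ℓ ∈ range n, a ℓ) =o[atTop] b := by
  -- Kronecker's lemma, via Abel summation against the partial sums `C n → c`
  set C := fun n => ∑ ℓ ∈ range n, a ℓ / b ℓ
  have hparts : ∀ n, ∑ ℓ ∈ range n, a ℓ = (C n - c) * b n + b 0 * c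
      - ∑ ℓ ∈ range n, (C (ℓ + 1) - c) * (b (ℓ + 1) - b ℓ) := by
    intro n
    induction n with
    | zero => simp only [C, range_zero, sum_empty]; ring
    | succ n ih =>
      have hCs : C (n + 1) = C n + a n / b n := sum_range_succ _ n
      rw [sum_range_succ, ih, sum_range_succ, hCs]
      field_simp [(hb n).ne']
      ring
  have hC : (fun n => C n - c) =o[atTop] (fun _ => (1 : ℝ)) :=
    (isLittleO_one_iff ℝ).2 (tendsto_sub_nhds_zero_iff.2 hc)
  have h1 : (fun n => (C n - c) * b n) =o[atTop] b := by
    simpa using hC.mul_isBigO (isBigO_refl b atTop)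
  have h2 : (fun _ => b 0 * c) =o[atTop] b :=
    isLittleO_const_left.2 (Or.inr (tendsto_norm_atTop_atTop.comp htop))
  have h3 : (fun n => ∑ ℓ ∈ range n, (C (ℓ + 1) - c) * (b (ℓ + 1) - b ℓ)) =o[atTop] b := by
    have hΔ : (fun ℓ => (C (ℓ + 1) - c) * (b (ℓ + 1) - b ℓ)) =o[atTop]
        fun ℓ => b (ℓ + 1) - b ℓ := by
      simpa using (hC.comp_tendsto (tendsto_add_atTop_nat 1)).mul_isBigO (isBigO_refl _ atTop)
    have hsum : Tendsto (fun n => ∑ ℓ ∈ range n, (b (ℓ + 1) - b ℓ)) atTop atTop := by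
      simp_rw [sum_range_sub]
      exact tendsto_atTop_add_const_right _ _ htop
    refine (hΔ.sum_range (fun ℓ => sub_nonneg.2 (hmono ℓ.le_succ)) hsum).trans_isBigO ?_
    refine IsBigO.of_bound 1 (Eventually.of_forall fun n => ?_)
    rw [sum_range_sub, one_mul, Real.norm_of_nonneg (sub_nonneg.2 (hmono n.zero_le)),
      Real.norm_of_nonneg (hb n).le]
    linarith [hb 0]
  exact ((h1.add h2).sub h3).congr_left fun n => (hparts n).symm

theorem isLittleO_sum_range_of_tendsto_sum_inv_one_add_mul {a p : ℕ → ℝ} (hp : ∀ n, 0 ≤ p n)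
    (htop : Tendsto (fun n => ∑ j ∈ range n, p j) atTop atTop) {c : ℝ}
    (hc : Tendsto (fun n => ∑ ℓ ∈ range n, (1 + ∑ j ∈ range ℓ, p j)⁻¹ * a ℓ) atTop (𝓝 c)) :
    (fun n => ∑ ℓ ∈ range n, a ℓ) =o[atTop] fun n => ∑ j ∈ range n, p j := by
  have hb : ∀ n, 0 < 1 + ∑ j ∈ range n, p j := fun n =>
    add_pos_of_pos_of_nonneg one_pos (sum_nonneg fun j _ => hp j)
  have hmono : Monotone fun n => 1 + ∑ j ∈ range n, p j := fun m n hmn =>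
    add_le_add_right (sum_le_sum_of_subset_of_nonneg (range_mono hmn) fun j _ _ => hp j) 1
  refine (isLittleO_sum_range_of_tendsto_sum_div hb hmono (tendsto_atTop_add_const_left _ 1 htop)
    (by simpa only [inv_mul_eq_div] using hc)).trans_isBigO ?_
  refine IsBigO.of_bound 2 ((htop.eventually_ge_atTop 1).mono fun n hn => ?_)
  rw [Real.norm_of_nonneg (hb n).le, Real.norm_of_nonneg (zero_le_one.trans hn)]
  linarith

theorem tendsto_sSup_abs_sum_range_mul_sub_div {x z P : ℕ → ℝ} {c t : ℝ → ℝ} {s : Set ℝ}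
    {D K : ℝ} (hc : ∀ θ ∈ s, |c θ| ≤ D) (ht : ∀ θ ∈ s, |t θ| ≤ K) (hP : ∀ n, 0 ≤ P n)
    (hx : (fun n => ∑ ℓ ∈ range n, x ℓ - P n) =o[atTop] P)
    (hxz : (fun n => ∑ ℓ ∈ range n, x ℓ * z ℓ) =o[atTop] P) :
    Tendsto (fun n => sSup ((fun θ =>
      |∑ ℓ ∈ range n, x ℓ * (c θ + t θ * z ℓ) - P n * c θ| / P n) '' s)) atTop (𝓝 0) := by
  rcases s.eq_empty_or_nonempty with rfl | ⟨θ₀, hθ₀⟩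
  · simp
  have hD : 0 ≤ D := (abs_nonneg _).trans (hc θ₀ hθ₀)
  have hK : 0 ≤ K := (abs_nonneg _).trans (ht θ₀ hθ₀)
  have hbound : Tendsto (fun n => D * |(∑ ℓ ∈ range n, x ℓ - P n) / P n|
      + K * |(∑ ℓ ∈ range n, x ℓ * z ℓ) / P n|) atTop (𝓝 0) := by
    simpa using (hx.tendsto_div_nhds_zero.abs.const_mul D).add
      (hxz.tendsto_div_nhds_zero.abs.const_mul K)
  refine tendsto_of_tendsto_of_tendsto_of_le_of_le tendsto_const_nhds hbound
    (fun n => Real.sSup_nonneg fun _ ⟨θ, _, hθ⟩ => hθ ▸ div_nonneg (abs_nonneg _) (hP n))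
    fun n => Real.sSup_le (fun _ ⟨θ, hθ, hy⟩ => hy ▸ ?_) (by positivity)
  have hsplit : ∑ ℓ ∈ range n, x ℓ * (c θ + t θ * z ℓ) - P n * c θ
      = c θ * (∑ ℓ ∈ range n, x ℓ - P n) + t θ * ∑ ℓ ∈ range n, x ℓ * z ℓ := by
    have hterm : ∀ ℓ, x ℓ * (c θ + t θ * z ℓ) = c θ * x ℓ + t θ * (x ℓ * z ℓ) := fun ℓ => by
      ring
    simp only [hterm, sum_add_distrib, ← mul_sum]
    ring
  dsimp only
  rw [hsplit, div_eq_mul_inv, ← abs_of_nonneg (inv_nonneg.2 (hP n)), ← abs_mul, add_mul,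
    mul_assoc, mul_assoc, ← div_eq_mul_inv, ← div_eq_mul_inv]
  refine (abs_add_le _ _).trans (add_le_add ?_ ?_) <;> rw [abs_mul]
  exacts [mul_le_mul_of_nonneg_right (hc θ hθ) (abs_nonneg _),
    mul_le_mul_of_nonneg_right (ht θ hθ) (abs_nonneg _)]

theorem finite_support_of_not_tendsto_sum_range {x : ℕ → ℝ} (hx : ∀ ℓ, x ℓ = 0 ∨ x ℓ = 1)
    (h : ¬Tendsto (fun n => ∑ ℓ ∈ range n, x ℓ) atTop atTop) : (Function.support x).Finite := by
  have hx0 : ∀ ℓ, 0 ≤ x ℓ := fun ℓ => by rcases hx ℓ with h | h <;> simp [h]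
  obtain ⟨M, hM⟩ : BddAbove (Set.range fun n => ∑ ℓ ∈ range n, x ℓ) := by
    by_contra hbdd
    exact h (tendsto_atTop_atTop_of_monotone'
      (fun m n hmn => sum_le_sum_of_subset_of_nonneg (range_mono hmn) fun ℓ _ _ => hx0 ℓ) hbdd)
  have hsum : Summable x := summable_of_sum_range_le hx0 fun n => hM ⟨n, rfl⟩
  have hlt : ∀ᶠ ℓ in cofinite, x ℓ < 1 :=
    hsum.tendsto_cofinite_zero.eventually (gt_mem_nhds one_pos)
  refine (eventually_cofinite.1 hlt).subset fun ℓ hℓ hlt => ?_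
  rcases hx ℓ with h0 | h1
  exacts [hℓ h0, (h1 ▸ hlt).false]

theorem exists_abs_sum_range_mul_add_le {x z P : ℕ → ℝ} {c t : ℝ → ℝ} {s : Set ℝ} {D K L : ℝ}
    (hx : (Function.support x).Finite) (hc : ∀ θ ∈ s, |c θ| ≤ D) (ht : ∀ θ ∈ s, |t θ| ≤ K)
    (hP : ∀ n, 0 ≤ P n) (hPL : ∀ n, P n ≤ L) :
    ∃ B, ∀ n, ∀ θ ∈ s, |∑ ℓ ∈ range n, x ℓ * (c θ + t θ * z ℓ)| + P n * c θ ≤ B := by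
  set f := fun ℓ => |x ℓ| * (D + K * |z ℓ|)
  have hf : Summable f := summable_of_hasFiniteSupport <|
    hx.subset fun ℓ hℓ h0 => hℓ (by simp [f, h0])
  refine ⟨∑' ℓ, f ℓ + L * D, fun n θ hθ => ?_⟩
  have hD : 0 ≤ D := (abs_nonneg _).trans (hc θ hθ)
  have hK : 0 ≤ K := (abs_nonneg _).trans (ht θ hθ)
  have hΛ : |∑ ℓ ∈ range n, x ℓ * (c θ + t θ * z ℓ)| ≤ ∑' ℓ, f ℓ :=
    calc |∑ ℓ ∈ range n, x ℓ * (c θ + t θ * z ℓ)|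
        ≤ ∑ ℓ ∈ range n, |x ℓ| * |c θ + t θ * z ℓ| := by
          simpa only [abs_mul] using abs_sum_le_sum_abs (fun ℓ => x ℓ * (c θ + t θ * z ℓ)) _
      _ ≤ ∑ ℓ ∈ range n, f ℓ := sum_le_sum fun ℓ _ => by
          refine mul_le_mul_of_nonneg_left ((abs_add_le _ _).trans ?_) (abs_nonneg _)
          rw [abs_mul]
          exact add_le_add (hc θ hθ) (mul_le_mul_of_nonneg_right (ht θ hθ) (abs_nonneg _))
      _ ≤ ∑' ℓ, f ℓ := hf.sum_le_tsum _ fun ℓ _ => by positivity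
  have hPc : P n * c θ ≤ L * D :=
    (mul_le_mul_of_nonneg_left (le_of_abs_le (hc θ hθ)) (hP n)).trans
      (mul_le_mul_of_nonneg_right (hPL n) hD)
  linarith

theorem tendsto_sSup_and_bounded_of_tendsto_weighted_sums {x p z : ℕ → ℝ} {c t : ℝ → ℝ}
    {s : Set ℝ} {D K : ℝ} (hc : ∀ θ ∈ s, |c θ| ≤ D) (ht : ∀ θ ∈ s, |t θ| ≤ K)
    (hx : ∀ ℓ, x ℓ = 0 ∨ x ℓ = 1) (hp : ∀ ℓ, 0 ≤ p ℓ)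
    (hxp : Tendsto (fun n => ∑ ℓ ∈ range n, x ℓ) atTop atTop →
      Tendsto (fun n => ∑ ℓ ∈ range n, p ℓ) atTop atTop) {c₁ c₂ : ℝ}
    (h₁ : Tendsto (fun n => ∑ ℓ ∈ range n, (1 + ∑ j ∈ range ℓ, p j)⁻¹ * (x ℓ - p ℓ))
      atTop (𝓝 c₁))
    (h₂ : Tendsto (fun n => ∑ ℓ ∈ range n, (1 + ∑ j ∈ range ℓ, p j)⁻¹ * x ℓ * z ℓ)
      atTop (𝓝 c₂)) :
    (Tendsto (fun n => ∑ ℓ ∈ range n, p ℓ) atTop atTop →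
      Tendsto (fun n => sSup ((fun θ => |∑ ℓ ∈ range n, x ℓ * (c θ + t θ * z ℓ)
        - (∑ ℓ ∈ range n, p ℓ) * c θ| / ∑ ℓ ∈ range n, p ℓ) '' s)) atTop (𝓝 0)) ∧
    ((∃ L, Tendsto (fun n => ∑ ℓ ∈ range n, p ℓ) atTop (𝓝 L)) →
      ∃ B, ∀ n, ∀ θ ∈ s,
        |∑ ℓ ∈ range n, x ℓ * (c θ + t θ * z ℓ)| + (∑ ℓ ∈ range n, p ℓ) * c θ ≤ B) := by
  have hP0 : ∀ n, 0 ≤ ∑ ℓ ∈ range n, p ℓ := fun n => sum_nonneg fun ℓ _ => hp ℓ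
  refine ⟨fun htop => ?_, fun ⟨L, hL⟩ => ?_⟩
  · refine tendsto_sSup_abs_sum_range_mul_sub_div hc ht hP0 ?_ ?_
    · simpa only [sum_sub_distrib] using
        isLittleO_sum_range_of_tendsto_sum_inv_one_add_mul hp htop h₁
    · exact isLittleO_sum_range_of_tendsto_sum_inv_one_add_mul hp htop
        (by simpa only [mul_assoc] using h₂)
  · have hPL : ∀ n, ∑ ℓ ∈ range n, p ℓ ≤ L :=
      (monotone_nat_of_le_succ fun n => by simpa [sum_range_succ] using hp n).ge_of_tendsto hL
    exact exists_abs_sum_range_mul_add_le (finite_support_of_not_tendsto_sum_range hx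
      fun h => not_tendsto_atTop_of_tendsto_nhds hL (hxp h)) hc ht hP0 hPL

theorem continuousOn_dKL {A : ℝ → ℝ} {s : Set ℝ} (hA : ContinuousOn A s) (θstar : ℝ) :
    ContinuousOn (dKL A θstar) s := by
  unfold dKL
  fun_prop

section CondExp

variable {Ω : Type*} {m G m0 : MeasurableSpace Ω} {μ : Measure Ω}

theorem integral_sq_mul_of_indep (hG : G ≤ m0) {u ξ : Ω → ℝ} (hu : Measurable[G] u)
    (hξm : Measurable ξ) (hind : Indep (MeasurableSpace.comap ξ inferInstance) G μ) :
    ∫ ω, (u ω * ξ ω) ^ 2 ∂μ = (∫ ω, u ω ^ 2 ∂μ) * ∫ ω, ξ ω ^ 2 ∂μ := by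
  have hind' : IndepFun (fun ω => ξ ω ^ 2) (fun ω => u ω ^ 2) μ :=
    indep_of_indep_of_le_left (indep_of_indep_of_le_right hind (hu.pow_const 2).comap_le)
      ((comap_measurable ξ).pow_const 2).comap_le
  calc ∫ ω, (u ω * ξ ω) ^ 2 ∂μ = ∫ ω, ((fun ω => ξ ω ^ 2) * fun ω => u ω ^ 2) ω ∂μ := by
        simp only [Pi.mul_apply, mul_pow, mul_comm]
    _ = (∫ ω, u ω ^ 2 ∂μ) * ∫ ω, ξ ω ^ 2 ∂μ := by
        rw [hind'.integral_mul_eq_mul_integral (hξm.pow_const 2).aestronglyMeasurable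
          ((hu.mono hG le_rfl).pow_const 2).aestronglyMeasurable, mul_comm]

variable [IsFiniteMeasure μ]

theorem integral_mul_condExp_of_stronglyMeasurable (hm : m ≤ m0)
    {f g : Ω → ℝ} (hf : StronglyMeasurable[m] f) (hfg : Integrable (f * g) μ)
    (hg : Integrable g μ) : ∫ ω, f ω * μ[g|m] ω ∂μ = ∫ ω, f ω * g ω ∂μ :=
  calc ∫ ω, f ω * μ[g|m] ω ∂μ = ∫ ω, μ[f * g|m] ω ∂μ :=
        integral_congr_ae (condExp_mul_of_stronglyMeasurable_left hf hfg hg).symm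
    _ = ∫ ω, f ω * g ω ∂μ := integral_condExp hm

theorem integrable_of_forall_mem_Icc {f : Ω → ℝ} (hf : AEStronglyMeasurable f μ)
    (hf01 : ∀ ω, f ω ∈ Set.Icc 0 1) : Integrable f μ :=
  Integrable.of_bound hf 1 <| Eventually.of_forall fun ω => by
    rw [Real.norm_of_nonneg (hf01 ω).1]; exact (hf01 ω).2

theorem ae_condExp_mem_Icc (hm : m ≤ m0) {f : Ω → ℝ} (hf : Integrable f μ)
    (hf01 : ∀ ω, f ω ∈ Set.Icc 0 1) : ∀ᵐ ω ∂μ, μ[f|m] ω ∈ Set.Icc 0 1 := by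
  have h0 : 0 ≤ᵐ[μ] μ[f|m] := condExp_nonneg (Eventually.of_forall fun ω => (hf01 ω).1)
  have h1 : μ[f|m] ≤ᵐ[μ] μ[fun _ => (1 : ℝ)|m] :=
    condExp_mono hf (integrable_const 1) (Eventually.of_forall fun ω => (hf01 ω).2)
  rw [condExp_const hm] at h1
  filter_upwards [h0, h1] with ω h0 h1 using ⟨h0, h1⟩

theorem condExp_mul_sub_condExp_eq_zero (hm : m ≤ m0) {v f : Ω → ℝ}
    (hv : StronglyMeasurable[m] v) (hvf : Integrable (v * (f - μ[f|m])) μ)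
    (hf : Integrable f μ) : μ[v * (f - μ[f|m])|m] =ᵐ[μ] 0 := by
  filter_upwards [condExp_mul_of_stronglyMeasurable_left hv hvf (hf.sub integrable_condExp),
    condExp_sub hf integrable_condExp m] with ω h1 h2
  rw [h1, Pi.mul_apply, h2, Pi.sub_apply,
    condExp_of_stronglyMeasurable hm stronglyMeasurable_condExp integrable_condExp]
  simp

theorem integral_sq_mul_sub_condExp_le_s15 (hm : m ≤ m0) {v f : Ω → ℝ}
    (hv : StronglyMeasurable[m] v) (hv1 : ∀ ω, |v ω| ≤ 1) (hf : Integrable f μ)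
    (hf01 : ∀ ω, f ω ∈ Set.Icc 0 1) :
    ∫ ω, (v ω * (f ω - μ[f|m] ω)) ^ 2 ∂μ ≤ 2 * ∫ ω, v ω ^ 2 * μ[f|m] ω ∂μ := by
  have hv2 : StronglyMeasurable[m] (fun ω => v ω ^ 2) := hv.pow 2
  have hv2b : ∀ᵐ ω ∂μ, ‖v ω ^ 2‖ ≤ 1 := Eventually.of_forall fun ω => by
    rw [Real.norm_eq_abs, abs_pow]; exact pow_le_one₀ (abs_nonneg _) (hv1 ω)
  have hv2f : Integrable (fun ω => v ω ^ 2 * f ω) μ :=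
    hf.bdd_mul (hv2.mono hm).aestronglyMeasurable hv2b
  have hv2g : Integrable (fun ω => v ω ^ 2 * μ[f|m] ω) μ :=
    integrable_condExp.bdd_mul (hv2.mono hm).aestronglyMeasurable hv2b
  have hpull := integral_mul_condExp_of_stronglyMeasurable hm hv2 hv2f hf
  calc ∫ ω, (v ω * (f ω - μ[f|m] ω)) ^ 2 ∂μ
      ≤ ∫ ω, (v ω ^ 2 * f ω + v ω ^ 2 * μ[f|m] ω) ∂μ := by
        refine integral_mono_of_nonneg (Eventually.of_forall fun ω => sq_nonneg _)
          (hv2f.add hv2g) ?_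
        filter_upwards [ae_condExp_mem_Icc hm hf hf01] with ω ⟨hg0, hg1⟩
        obtain ⟨hf0, hf1⟩ := hf01 ω
        have : (f ω - μ[f|m] ω) ^ 2 ≤ f ω + μ[f|m] ω := by nlinarith
        nlinarith [sq_nonneg (v ω)]
    _ = 2 * ∫ ω, v ω ^ 2 * μ[f|m] ω ∂μ := by
        rw [integral_add hv2f hv2g, ← hpull]
        ring

theorem condExp_mul_eq_zero_of_indep (hG : G ≤ m0) (hmG : m ≤ G) {u ξ : Ω → ℝ}
    (hu : StronglyMeasurable[G] u) (huξ : Integrable (u * ξ) μ) (hξ : Integrable ξ μ)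
    (hξm : Measurable ξ) (hind : Indep (MeasurableSpace.comap ξ inferInstance) G μ)
    (hmean : ∫ ω, ξ ω ∂μ = 0) : μ[u * ξ|m] =ᵐ[μ] 0 := by
  have hξG : μ[ξ|G] =ᵐ[μ] fun _ => 0 := by
    simpa [hmean] using condExp_indep_eq hξm.comap_le hG
      (measurable_iff_comap_le.2 le_rfl).stronglyMeasurable hind
  have huξG : μ[u * ξ|G] =ᵐ[μ] 0 := by
    filter_upwards [condExp_mul_of_stronglyMeasurable_left hu huξ hξ, hξG] with ω h1 h2
    simp [h1, h2]
  calc μ[u * ξ|m] =ᵐ[μ] μ[μ[u * ξ|G]|m] := (condExp_condExp_of_le hmG hG).symm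
    _ =ᵐ[μ] μ[(0 : Ω → ℝ)|m] := condExp_congr_ae huξG
    _ = 0 := condExp_zero

end CondExp

section Martingale

variable {Ω : Type*} {m0 : MeasurableSpace Ω} {μ : Measure Ω}

theorem eLpNorm_one_le_of_integral_sq_le [IsProbabilityMeasure μ] {f : Ω → ℝ}
    (hf : MemLp f 2 μ) {K : ℝ} (hK : ∫ ω, f ω ^ 2 ∂μ ≤ K) :
    eLpNorm f 1 μ ≤ ENNReal.ofReal ((1 + K) / 2) := by
  have hfi : Integrable f μ := hf.integrable one_le_two
  rw [eLpNorm_one_eq_lintegral_enorm, ← ofReal_integral_norm_eq_lintegral_enorm hfi]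
  refine ENNReal.ofReal_le_ofReal ?_
  calc ∫ ω, ‖f ω‖ ∂μ ≤ ∫ ω, (1 + f ω ^ 2) / 2 ∂μ :=
        integral_mono hfi.norm ((integrable_const 1).add hf.integrable_sq |>.div_const 2)
          fun ω => by nlinarith [sq_nonneg (|f ω| - 1), sq_abs (f ω), Real.norm_eq_abs (f ω)]
    _ = (1 + ∫ ω, f ω ^ 2 ∂μ) / 2 := by
        rw [integral_div, integral_add (integrable_const 1) hf.integrable_sq]
        simp
    _ ≤ (1 + K) / 2 := by linarith

variable [IsProbabilityMeasure μ] {ℱ : Filtration ℕ m0} {d : ℕ → Ω → ℝ}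

theorem martingale_sum_range_of_condExp_eq_zero (hd : ∀ n, StronglyMeasurable[ℱ (n + 1)] (d n))
    (hint : ∀ n, Integrable (d n) μ) (hcond : ∀ n, μ[d n|ℱ n] =ᵐ[μ] 0) :
    Martingale (fun n => ∑ ℓ ∈ range n, d ℓ) ℱ μ :=
  martingale_of_condExp_sub_eq_zero_nat
    (fun n => Finset.stronglyMeasurable_sum _ fun ℓ hℓ =>
      (hd ℓ).mono (ℱ.mono (mem_range.1 hℓ)))
    (fun n => integrable_finsetSum' _ fun ℓ _ => hint ℓ)
    (fun n => by simpa only [sum_range_succ, add_sub_cancel_left] using hcond n)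

theorem integral_sq_sum_range_of_condExp_eq_zero
    (hd : ∀ n, StronglyMeasurable[ℱ (n + 1)] (d n)) (hL2 : ∀ n, MemLp (d n) 2 μ)
    (hcond : ∀ n, μ[d n|ℱ n] =ᵐ[μ] 0) (n : ℕ) :
    ∫ ω, (∑ ℓ ∈ range n, d ℓ) ω ^ 2 ∂μ = ∑ ℓ ∈ range n, ∫ ω, d ℓ ω ^ 2 ∂μ := by
  induction n with
  | zero => simp
  | succ n ih =>
    set N := ∑ ℓ ∈ range n, d ℓ
    have hN : MemLp N 2 μ := memLp_finsetSum' _ fun ℓ _ => hL2 ℓ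
    have hNd : Integrable (N * d n) μ := hN.integrable_mul (hL2 n)
    have horth : ∫ ω, N ω * d n ω ∂μ = 0 := by
      have hNm : StronglyMeasurable[ℱ n] N :=
        (martingale_sum_range_of_condExp_eq_zero hd
          (fun ℓ => (hL2 ℓ).integrable one_le_two) hcond).stronglyAdapted n
      rw [← integral_mul_condExp_of_stronglyMeasurable (ℱ.le n) hNm hNd
        ((hL2 n).integrable one_le_two)]
      exact integral_eq_zero_of_ae ((hcond n).mono fun ω hω => by simp [hω])
    calc ∫ ω, (∑ ℓ ∈ range (n + 1), d ℓ) ω ^ 2 ∂μ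
        = ∫ ω, (N ω ^ 2 + 2 * (N ω * d n ω) + d n ω ^ 2) ∂μ := by
          refine integral_congr_ae (Eventually.of_forall fun ω => ?_)
          simp only [sum_range_succ, Pi.add_apply, N]
          ring
      _ = ∫ ω, N ω ^ 2 ∂μ + 2 * ∫ ω, N ω * d n ω ∂μ + ∫ ω, d n ω ^ 2 ∂μ := by
          have h1 : Integrable (fun ω => N ω ^ 2) μ := hN.integrable_sq
          have h2 : Integrable (fun ω => 2 * (N ω * d n ω)) μ := hNd.const_mul 2
          have h12 : Integrable (fun ω => N ω ^ 2 + 2 * (N ω * d n ω)) μ := h1.add h2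
          rw [integral_add h12 (hL2 n).integrable_sq, integral_add h1 h2,
            integral_const_mul]
      _ = ∑ ℓ ∈ range (n + 1), ∫ ω, d ℓ ω ^ 2 ∂μ := by
          rw [horth, ih, sum_range_succ]
          ring

theorem ae_tendsto_sum_range_of_sum_integral_sq_le
    (hd : ∀ n, StronglyMeasurable[ℱ (n + 1)] (d n)) (hL2 : ∀ n, MemLp (d n) 2 μ)
    (hcond : ∀ n, μ[d n|ℱ n] =ᵐ[μ] 0) {K : ℝ}
    (hK : ∀ n, ∑ ℓ ∈ range n, ∫ ω, d ℓ ω ^ 2 ∂μ ≤ K) :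
    ∀ᵐ ω ∂μ, ∃ c, Tendsto (fun n => ∑ ℓ ∈ range n, d ℓ ω) atTop (𝓝 c) := by
  have hmart := martingale_sum_range_of_condExp_eq_zero hd
    (fun ℓ => (hL2 ℓ).integrable one_le_two) hcond
  have hbdd : ∀ n, eLpNorm (∑ ℓ ∈ range n, d ℓ) 1 μ ≤ ENNReal.ofReal ((1 + K) / 2) :=
    fun n => eLpNorm_one_le_of_integral_sq_le (memLp_finsetSum' _ fun ℓ _ => hL2 ℓ)
      ((integral_sq_sum_range_of_condExp_eq_zero hd hL2 hcond n).trans_le (hK n))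
  simpa only [Finset.sum_apply] using hmart.submartingale.exists_ae_tendsto_of_bdd hbdd

end Martingale

theorem sum_range_div_one_add_sum_sq_le_two {p : ℕ → ℝ} (hp0 : ∀ ℓ, 0 ≤ p ℓ)
    (hp1 : ∀ ℓ, p ℓ ≤ 1) (n : ℕ) :
    ∑ ℓ ∈ range n, p ℓ / (1 + ∑ j ∈ range ℓ, p j) ^ 2 ≤ 2 := by
  set B := fun ℓ => 1 + ∑ j ∈ range ℓ, p j
  have hB : ∀ ℓ, 1 ≤ B ℓ := fun ℓ => le_add_of_nonneg_right (sum_nonneg fun j _ => hp0 j)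
  -- `p / B² ≤ 2 p / (B (B + p)) = 2 / B - 2 / (B + p)` because `p ≤ 1 ≤ B`
  have hstep : ∀ ℓ, p ℓ / B ℓ ^ 2 ≤ 2 / B ℓ - 2 / B (ℓ + 1) := by
    intro ℓ
    have hBs : B (ℓ + 1) = B ℓ + p ℓ := by simp only [B, sum_range_succ]; ring
    have h0 : 0 < B ℓ := one_pos.trans_le (hB ℓ)
    rw [hBs, div_sub_div _ _ h0.ne' (by linarith [hp0 ℓ]), div_le_div_iff₀ (by positivity)
      (by nlinarith [hp0 ℓ])]
    nlinarith [mul_nonneg (mul_nonneg (hp0 ℓ) h0.le) (sub_nonneg.2 ((hp1 ℓ).trans (hB ℓ)))]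
  calc ∑ ℓ ∈ range n, p ℓ / B ℓ ^ 2 ≤ ∑ ℓ ∈ range n, (2 / B ℓ - 2 / B (ℓ + 1)) :=
        sum_le_sum fun ℓ _ => hstep ℓ
    _ = 2 - 2 / B n := by rw [sum_range_sub']; simp [B]
    _ ≤ 2 := sub_le_self _ (div_nonneg zero_le_two (zero_le_one.trans (hB n)))

section Compensator

variable {Ω : Type*} {m0 : MeasurableSpace Ω} {μ : Measure Ω} {ℱ : Filtration ℕ m0}

-- The `max` keeps the weight in `(0, 1]` even where some `ψ j` is negative.
noncomputable def compensatorWeight (ψ : ℕ → Ω → ℝ) (n : ℕ) (ω : Ω) : ℝ :=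
  (max 1 (1 + ∑ j ∈ range n, ψ j ω))⁻¹

theorem abs_compensatorWeight_le_one (ψ : ℕ → Ω → ℝ) (n : ℕ) (ω : Ω) :
    |compensatorWeight ψ n ω| ≤ 1 := by
  rw [compensatorWeight, abs_inv, abs_of_pos (one_pos.trans_le (le_max_left _ _))]
  exact inv_le_one_of_one_le₀ (le_max_left _ _)

theorem compensatorWeight_of_nonneg {ψ : ℕ → Ω → ℝ} {ω : Ω} (hψ : ∀ j, 0 ≤ ψ j ω) (n : ℕ) :
    compensatorWeight ψ n ω = (1 + ∑ j ∈ range n, ψ j ω)⁻¹ := by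
  rw [compensatorWeight, max_eq_right (le_add_of_nonneg_right (sum_nonneg fun j _ => hψ j))]

theorem stronglyMeasurable_compensatorWeight {ψ : ℕ → Ω → ℝ}
    (hψ : ∀ n, StronglyMeasurable[ℱ n] (ψ n)) (n : ℕ) :
    StronglyMeasurable[ℱ n] (compensatorWeight ψ n) :=
  (measurable_const.max (measurable_const.add (Finset.measurable_sum _ fun j hj =>
    ((hψ j).mono (ℱ.mono (mem_range.1 hj).le)).measurable))).inv.stronglyMeasurable

theorem sum_integral_compensatorWeight_sq_mul_le_two [IsProbabilityMeasure μ]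
    {ψ : ℕ → Ω → ℝ} (hψ : ∀ n, StronglyMeasurable[ℱ n] (ψ n))
    (hψ01 : ∀ᵐ ω ∂μ, ∀ n, ψ n ω ∈ Set.Icc 0 1) (n : ℕ) :
    ∑ ℓ ∈ range n, ∫ ω, compensatorWeight ψ ℓ ω ^ 2 * ψ ℓ ω ∂μ ≤ 2 := by
  have hint : ∀ ℓ, Integrable (fun ω => compensatorWeight ψ ℓ ω ^ 2 * ψ ℓ ω) μ := fun ℓ =>
    Integrable.of_bound
      ((((stronglyMeasurable_compensatorWeight hψ ℓ).pow 2).mul (hψ ℓ)).mono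
        (ℱ.le ℓ)).aestronglyMeasurable 1 <| by
      filter_upwards [hψ01] with ω hω
      rw [norm_mul, norm_pow, Real.norm_eq_abs, Real.norm_of_nonneg (hω ℓ).1]
      exact mul_le_one₀ (pow_le_one₀ (abs_nonneg _) (abs_compensatorWeight_le_one ψ ℓ ω))
        (hω ℓ).1 (hω ℓ).2
  rw [← integral_finsetSum _ fun ℓ _ => hint ℓ]
  refine (integral_mono_ae (integrable_finsetSum _ fun ℓ _ => hint ℓ) (integrable_const 2)
    ?_).trans_eq (by simp)
  filter_upwards [hψ01] with ω hω
  simpa only [compensatorWeight_of_nonneg (fun j => (hω j).1), inv_pow, inv_mul_eq_div] using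
    sum_range_div_one_add_sum_sq_le_two (fun j => (hω j).1) (fun j => (hω j).2) n

theorem indicator_setOf_eq_one {f : Ω → ℝ} (hf : ∀ ω, f ω = 0 ∨ f ω = 1) :
    {ω | f ω = 1}.indicator (fun _ => (1 : ℝ)) = f := by
  funext ω
  rcases hf ω with h | h <;> simp [h]

theorem ae_tendsto_sum_range_atTop_iff_sum_condExp [IsFiniteMeasure μ] {X : ℕ → Ω → ℝ}
    (hX : ∀ n, StronglyMeasurable[ℱ (n + 1)] (X n)) (hX01 : ∀ n ω, X n ω = 0 ∨ X n ω = 1) :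
    ∀ᵐ ω ∂μ, Tendsto (fun n => ∑ ℓ ∈ range n, X ℓ ω) atTop atTop ↔
      Tendsto (fun n => ∑ ℓ ∈ range n, μ[X ℓ|ℱ ℓ] ω) atTop atTop := by
  let s : ℕ → Set Ω := fun k => Nat.casesOn k ∅ fun ℓ => {ω | X ℓ ω = 1}
  have hs : ∀ k, MeasurableSet[ℱ k] (s k)
    | 0 => @MeasurableSet.empty _ (ℱ 0)
    | ℓ + 1 => (hX ℓ).measurable (measurableSet_singleton 1)
  have hind : ∀ ℓ, (s (ℓ + 1)).indicator (1 : Ω → ℝ) = X ℓ := fun ℓ =>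
    indicator_setOf_eq_one (hX01 ℓ)
  simpa only [hind] using tendsto_sum_indicator_atTop_iff' (μ := μ) hs

variable [IsProbabilityMeasure μ] {X v : ℕ → Ω → ℝ}

theorem ae_tendsto_sum_mul_sub_condExp (hX : ∀ n, StronglyMeasurable[ℱ (n + 1)] (X n))
    (hX01 : ∀ n ω, X n ω ∈ Set.Icc 0 1) (hv : ∀ n, StronglyMeasurable[ℱ n] (v n))
    (hv1 : ∀ n ω, |v n ω| ≤ 1) {K : ℝ}
    (hK : ∀ n, ∑ ℓ ∈ range n, ∫ ω, v ℓ ω ^ 2 * μ[X ℓ|ℱ ℓ] ω ∂μ ≤ K) :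
    ∀ᵐ ω ∂μ, ∃ c, Tendsto (fun n => ∑ ℓ ∈ range n, v ℓ ω * (X ℓ ω - μ[X ℓ|ℱ ℓ] ω))
      atTop (𝓝 c) := by
  have hXi : ∀ n, Integrable (X n) μ := fun n =>
    integrable_of_forall_mem_Icc ((hX n).mono (ℱ.le _)).aestronglyMeasurable (hX01 n)
  have hd : ∀ n, StronglyMeasurable[ℱ (n + 1)] (v n * (X n - μ[X n|ℱ n])) := fun n =>
    ((hv n).mono (ℱ.mono n.le_succ)).mul
      ((hX n).sub (stronglyMeasurable_condExp.mono (ℱ.mono n.le_succ)))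
  have hL2 : ∀ n, MemLp (v n * (X n - μ[X n|ℱ n])) 2 μ := fun n =>
    MemLp.of_bound ((hd n).mono (ℱ.le _)).aestronglyMeasurable 1 <| by
      filter_upwards [ae_condExp_mem_Icc (ℱ.le n) (hXi n) (hX01 n)] with ω hω
      rw [Pi.mul_apply, norm_mul, ← one_mul (1 : ℝ)]
      exact mul_le_mul (hv1 n ω) (Real.dist_le_of_mem_Icc_01 (hX01 n ω) hω) (norm_nonneg _)
        zero_le_one
  refine ae_tendsto_sum_range_of_sum_integral_sq_le hd hL2
    (fun n => condExp_mul_sub_condExp_eq_zero (ℱ.le n) (hv n) ((hL2 n).integrable one_le_two)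
      (hXi n)) (K := 2 * K) fun n => ?_
  calc ∑ ℓ ∈ range n, ∫ ω, (v ℓ * (X ℓ - μ[X ℓ|ℱ ℓ])) ω ^ 2 ∂μ
      ≤ ∑ ℓ ∈ range n, 2 * ∫ ω, v ℓ ω ^ 2 * μ[X ℓ|ℱ ℓ] ω ∂μ :=
        sum_le_sum fun ℓ _ => integral_sq_mul_sub_condExp_le_s15 (ℱ.le ℓ) (hv ℓ) (hv1 ℓ) (hXi ℓ)
          (hX01 ℓ)
    _ ≤ 2 * K := by rw [← mul_sum]; linarith [hK n]

theorem ae_tendsto_sum_mul_mul_of_indep {ξ : ℕ → Ω → ℝ}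
    (hX : ∀ n, StronglyMeasurable[ℱ (n + 1)] (X n)) (hX01 : ∀ n ω, X n ω ∈ Set.Icc 0 1)
    (hv : ∀ n, StronglyMeasurable[ℱ n] (v n)) (hv1 : ∀ n ω, |v n ω| ≤ 1)
    (hξ : ∀ n, StronglyMeasurable[ℱ (n + 1)] (ξ n)) (hξL2 : ∀ n, MemLp (ξ n) 2 μ)
    (hξmean : ∀ n, ∫ ω, ξ n ω ∂μ = 0) {σ2 : ℝ} (hξvar : ∀ n, ∫ ω, ξ n ω ^ 2 ∂μ ≤ σ2)
    (hind : ∀ n, Indep (MeasurableSpace.comap (ξ n) inferInstance)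
      (ℱ n ⊔ MeasurableSpace.comap (X n) inferInstance) μ) {K : ℝ}
    (hK : ∀ n, ∑ ℓ ∈ range n, ∫ ω, v ℓ ω ^ 2 * μ[X ℓ|ℱ ℓ] ω ∂μ ≤ K) :
    ∀ᵐ ω ∂μ, ∃ c, Tendsto (fun n => ∑ ℓ ∈ range n, v ℓ ω * X ℓ ω * ξ ℓ ω) atTop (𝓝 c) := by
  have hXm : ∀ n, Measurable (X n) := fun n => ((hX n).mono (ℱ.le _)).measurable
  have hξm : ∀ n, Measurable (ξ n) := fun n => ((hξ n).mono (ℱ.le _)).measurable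
  have hG : ∀ n, ℱ n ⊔ MeasurableSpace.comap (X n) inferInstance ≤ m0 := fun n =>
    sup_le (ℱ.le n) (hXm n).comap_le
  have hu : ∀ n, StronglyMeasurable[ℱ n ⊔ MeasurableSpace.comap (X n) inferInstance]
      (v n * X n) := fun n =>
    ((hv n).mono le_sup_left).mul ((comap_measurable (X n)).stronglyMeasurable.mono le_sup_right)
  have hu1 : ∀ n ω, |v n ω * X n ω| ≤ 1 := fun n ω => by
    rw [abs_mul, abs_of_nonneg (hX01 n ω).1]
    exact mul_le_one₀ (hv1 n ω) (hX01 n ω).1 (hX01 n ω).2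
  have hd : ∀ n, StronglyMeasurable[ℱ (n + 1)] (v n * X n * ξ n) := fun n =>
    (((hv n).mono (ℱ.mono n.le_succ)).mul (hX n)).mul (hξ n)
  have hL2 : ∀ n, MemLp (v n * X n * ξ n) 2 μ := fun n =>
    (hξL2 n).mul' (p := ⊤) (MemLp.of_bound ((hu n).mono (hG n)).aestronglyMeasurable 1
      (Eventually.of_forall (hu1 n)))
  refine ae_tendsto_sum_range_of_sum_integral_sq_le hd hL2 (fun n => ?_) (K := σ2 * K)
    fun n => ?_
  · exact condExp_mul_eq_zero_of_indep (hG n) le_sup_left (hu n) ((hL2 n).integrable one_le_two)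
      ((hξL2 n).integrable one_le_two) (hξm n) (hind n) (hξmean n)
  have hσ2 : 0 ≤ σ2 := (integral_nonneg fun ω => sq_nonneg (ξ 0 ω)).trans (hξvar 0)
  -- `X ≤ 1` gives `(v X)² ≤ v² X`, whose mean is that of `v² 𝔼[X | ℱ]`
  have hstep : ∀ ℓ, ∫ ω, (v ℓ * X ℓ * ξ ℓ) ω ^ 2 ∂μ
      ≤ σ2 * ∫ ω, v ℓ ω ^ 2 * μ[X ℓ|ℱ ℓ] ω ∂μ := fun ℓ => by
    have hv2 : StronglyMeasurable[ℱ ℓ] (fun ω => v ℓ ω ^ 2) := (hv ℓ).pow 2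
    have hXi : Integrable (X ℓ) μ :=
      integrable_of_forall_mem_Icc ((hX ℓ).mono (ℱ.le _)).aestronglyMeasurable (hX01 ℓ)
    have hv2b : ∀ᵐ ω ∂μ, ‖v ℓ ω ^ 2‖ ≤ 1 := Eventually.of_forall fun ω => by
      rw [norm_pow, Real.norm_eq_abs]; exact pow_le_one₀ (abs_nonneg _) (hv1 ℓ ω)
    have hv2X : Integrable (fun ω => v ℓ ω ^ 2 * X ℓ ω) μ :=
      hXi.bdd_mul ((hv2.mono (ℱ.le ℓ)).aestronglyMeasurable) hv2b
    have hu2 : ∫ ω, (v ℓ ω * X ℓ ω) ^ 2 ∂μ ≤ ∫ ω, v ℓ ω ^ 2 * μ[X ℓ|ℱ ℓ] ω ∂μ := by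
      rw [integral_mul_condExp_of_stronglyMeasurable (ℱ.le ℓ) hv2 hv2X hXi]
      refine integral_mono_of_nonneg (Eventually.of_forall fun ω => sq_nonneg _) hv2X
        (Eventually.of_forall fun ω => ?_)
      obtain ⟨h0, h1⟩ := hX01 ℓ ω
      simp only [mul_pow]
      exact mul_le_mul_of_nonneg_left (by nlinarith) (sq_nonneg _)
    refine (integral_sq_mul_of_indep (u := v ℓ * X ℓ) (hG ℓ) (hu ℓ).measurable (hξm ℓ)
      (hind ℓ)).trans_le ?_
    rw [mul_comm σ2]
    exact mul_le_mul hu2 (hξvar ℓ) (integral_nonneg fun ω => sq_nonneg _)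
      ((integral_nonneg fun ω => sq_nonneg _).trans hu2)
  calc ∑ ℓ ∈ range n, ∫ ω, (v ℓ * X ℓ * ξ ℓ) ω ^ 2 ∂μ
      ≤ ∑ ℓ ∈ range n, σ2 * ∫ ω, v ℓ ω ^ 2 * μ[X ℓ|ℱ ℓ] ω ∂μ := sum_le_sum fun ℓ _ => hstep ℓ
    _ ≤ σ2 * K := by rw [← mul_sum]; exact mul_le_mul_of_nonneg_left (hK n) hσ2

end Compensator

-- Indices are shifted by one against the paper: `ξ n`, `X n` are `ξ_{n+1}`, `X_{n+1}`,
-- and `ψ n = 𝐏(X_{n+1} = 1 | ℱ_n)`.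
theorem stmt_15_general (lo hi : ℝ) (A : ℝ → ℝ) (hA : Differentiable ℝ A)
    (θstar : ℝ) (hθstar : θstar ∈ Set.Icc lo hi)
    {Ω : Type*} [m0 : MeasurableSpace Ω] (μ : Measure Ω) [IsProbabilityMeasure μ]
    (ℱ : Filtration ℕ m0) (ξ X : ℕ → Ω → ℝ)
    (hξdist : ∀ n, Measure.map (ξ n) μ = Measure.map (ξ 0) μ)
    (hξL2 : ∀ n, MemLp (ξ n) 2 μ)
    (hξmean : ∫ ω, ξ 0 ω ∂μ = 0)
    (hξadapted : ∀ n, StronglyMeasurable[ℱ (n + 1)] (ξ n))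
    (hXadapted : ∀ n, StronglyMeasurable[ℱ (n + 1)] (X n))
    (hX01 : ∀ n ω, X n ω = 0 ∨ X n ω = 1)
    (hindep : ∀ n, Indep (MeasurableSpace.comap (ξ n) Real.measurableSpace)
      (ℱ n ⊔ MeasurableSpace.comap (X n) Real.measurableSpace) μ)
    (ψ : ℕ → Ω → ℝ)
    (hψ : ∀ n, ψ n = μ[Set.indicator {ω | X n ω = 1} (fun _ => (1 : ℝ)) | ℱ n]) :
    ∀ᵐ ω ∂μ,
      (Tendsto (fun n => ∑ ℓ ∈ Finset.range n, ψ ℓ ω) atTop atTop →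
        Tendsto (fun n => sSup ((fun θ =>
            |(∑ ℓ ∈ Finset.range n, X ℓ ω * (dKL A θstar θ + (θstar - θ) * ξ ℓ ω)) -
              (∑ ℓ ∈ Finset.range n, ψ ℓ ω) * dKL A θstar θ| /
            (∑ ℓ ∈ Finset.range n, ψ ℓ ω)) '' Set.Icc lo hi))
          atTop (nhds 0)) ∧
      ((∃ L : ℝ, Tendsto (fun n => ∑ ℓ ∈ Finset.range n, ψ ℓ ω) atTop (nhds L)) →
        ∃ B : ℝ, ∀ n : ℕ, ∀ θ ∈ Set.Icc lo hi,
          |∑ ℓ ∈ Finset.range n, X ℓ ω * (dKL A θstar θ + (θstar - θ) * ξ ℓ ω)| +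
            (∑ ℓ ∈ Finset.range n, ψ ℓ ω) * dKL A θstar θ ≤ B) := by
  obtain ⟨D, hD⟩ := isCompact_Icc.exists_bound_of_continuousOn
    (continuousOn_dKL hA.continuous.continuousOn θstar)
  simp only [Real.norm_eq_abs] at hD
  have hθ : ∀ θ ∈ Set.Icc lo hi, |θstar - θ| ≤ hi - lo := fun θ hθ =>
    Real.dist_le_of_mem_Icc hθstar hθ
  obtain rfl : ψ = fun n => μ[X n|ℱ n] :=
    funext fun n => by rw [hψ, indicator_setOf_eq_one (hX01 n)]
  have hXI : ∀ n ω, X n ω ∈ Set.Icc 0 1 := fun n ω => by rcases hX01 n ω with h | h <;> simp [h]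
  have hψ01 : ∀ᵐ ω ∂μ, ∀ n, μ[X n|ℱ n] ω ∈ Set.Icc 0 1 := ae_all_iff.2 fun n =>
    ae_condExp_mem_Icc (ℱ.le n)
      (integrable_of_forall_mem_Icc ((hXadapted n).mono (ℱ.le _)).aestronglyMeasurable (hXI n))
      (hXI n)
  have hξid : ∀ n, IdentDistrib (ξ n) (ξ 0) μ μ := fun n =>
    ⟨((hξadapted n).mono (ℱ.le _)).measurable.aemeasurable,
      ((hξadapted 0).mono (ℱ.le _)).measurable.aemeasurable, hξdist n⟩
  have hw := stronglyMeasurable_compensatorWeight (ℱ := ℱ) fun n =>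
    stronglyMeasurable_condExp (μ := μ) (f := X n)
  have hK := sum_integral_compensatorWeight_sq_mul_le_two (fun n => stronglyMeasurable_condExp) hψ01
  filter_upwards [ae_tendsto_sum_mul_sub_condExp hXadapted hXI hw
      (abs_compensatorWeight_le_one _) hK,
    ae_tendsto_sum_mul_mul_of_indep hXadapted hXI hw (abs_compensatorWeight_le_one _) hξadapted
      hξL2 (fun n => (hξid n).integral_eq.trans hξmean)
      (fun n => ((hξid n).comp (measurable_id.pow_const 2)).integral_eq.le) hindep hK,
    ae_tendsto_sum_range_atTop_iff_sum_condExp hXadapted hX01, hψ01]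
    with ω ⟨c₁, h₁⟩ ⟨c₂, h₂⟩ hBC hψω
  simp only [compensatorWeight_of_nonneg (fun j => (hψω j).1)] at h₁ h₂
  exact tendsto_sSup_and_bounded_of_tendsto_weighted_sums hD hθ (hX01 · ω) (fun j => (hψω j).1)
    hBC.1 h₁ h₂

/-- Uniform convergence of the log-likelihood ratio
`Λ_n(θ) = Σ_ℓ X_ℓ (d(θ*, θ) + (θ* - θ) ξ_ℓ)` under adaptive sampling.
Sequences are 0-indexed: `ξ n`, `X n` play the roles of the paper's
`ξ_{n+1}`, `X_{n+1}` (adapted to `ℱ (n+1)`), and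
`ψ n = 𝐏(X_{n+1} = 1 | ℱ_n)`, `Ψ_n = Σ_{ℓ < n} ψ_ℓ`.
With probability 1: on the event `Ψ_n → ∞`,
`sup_{θ ∈ [θ̲,θ̄]} Ψ_n⁻¹ |Λ_n(θ) - Ψ_n d(θ*,θ)| → 0`; on the event
`lim Ψ_n < ∞`, `sup_θ sup_n (|Λ_n(θ)| + Ψ_n d(θ*,θ)) < ∞`. -/
theorem stmt_15 (lo hi : ℝ) (hlh : lo < hi) (A : ℝ → ℝ) (hA : Differentiable ℝ A)
    (Cb : ℝ) (hC : ∀ θ ∈ Set.Icc lo hi, |deriv A θ| ≤ Cb)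
    (θstar : ℝ) (hθstar : θstar ∈ Set.Icc lo hi)
    {Ω : Type*} [m0 : MeasurableSpace Ω] (μ : Measure Ω) [IsProbabilityMeasure μ]
    (ℱ : Filtration ℕ m0) (ξ X : ℕ → Ω → ℝ)
    (hξdist : ∀ n, Measure.map (ξ n) μ = Measure.map (ξ 0) μ)
    (hξL2 : ∀ n, MemLp (ξ n) 2 μ)
    (hξmean : ∫ ω, ξ 0 ω ∂μ = 0)
    (hξadapted : ∀ n, StronglyMeasurable[ℱ (n + 1)] (ξ n))
    (hXadapted : ∀ n, StronglyMeasurable[ℱ (n + 1)] (X n))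
    (hX01 : ∀ n ω, X n ω = 0 ∨ X n ω = 1)
    (hindep : ∀ n, Indep (MeasurableSpace.comap (ξ n) Real.measurableSpace)
      (ℱ n ⊔ MeasurableSpace.comap (X n) Real.measurableSpace) μ)
    (ψ : ℕ → Ω → ℝ)
    (hψ : ∀ n, ψ n = μ[Set.indicator {ω | X n ω = 1} (fun _ => (1 : ℝ)) | ℱ n]) :
    ∀ᵐ ω ∂μ,
      (Tendsto (fun n => ∑ ℓ ∈ Finset.range n, ψ ℓ ω) atTop atTop →
        Tendsto (fun n => sSup ((fun θ =>
            |(∑ ℓ ∈ Finset.range n, X ℓ ω * (dKL A θstar θ + (θstar - θ) * ξ ℓ ω)) -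
              (∑ ℓ ∈ Finset.range n, ψ ℓ ω) * dKL A θstar θ| /
            (∑ ℓ ∈ Finset.range n, ψ ℓ ω)) '' Set.Icc lo hi))
          atTop (nhds 0)) ∧
      ((∃ L : ℝ, Tendsto (fun n => ∑ ℓ ∈ Finset.range n, ψ ℓ ω) atTop (nhds L)) →
        ∃ B : ℝ, ∀ n : ℕ, ∀ θ ∈ Set.Icc lo hi,
          |∑ ℓ ∈ Finset.range n, X ℓ ω * (dKL A θstar θ + (θstar - θ) * ξ ℓ ω)| +
            (∑ ℓ ∈ Finset.range n, ψ ℓ ω) * dKL A θstar θ ≤ B) :=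
  stmt_15_general lo hi A hA θstar hθstar (m0 := m0) μ ℱ ξ X hξdist hξL2 hξmean hξadapted hXadapted
    hX01 hindep ψ hψ
end
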